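/- arXiv:1407.5268 — 3 statements merged into one kernel-verified Lean document; each statement's English description precedes it below -/
import Mathlib

section
/- Every signed circuit of a signed graph admits a nowhere-zero integer flow, and signed circuits are inclusion-minimal with this property: no proper nonempty subgraph of a signed circuit admits a nowhere-zero integer flow. -/
/-! ## Signed graphs, bidirected orientations, flows, circuits -/

/-- A signed graph on vertex type `V` and edge type `E`: each edge has two
half-edges (indexed by `Bool`), each with an endpoint, and a sign
(`true` = positive, `false` = negative). -/
structure SignedGraph (V E : Type) where
  ends : E → Bool → V
  sign : E → Bool

variable {V E : Type}

/-- A bidirected orientation: `dir e i = true` means the half-edge `i` of `e`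
is directed *toward* its endpoint.  Positive edges have one half in, one half
out; negative edges have both halves directed the same way. -/
structure SOrientation (G : SignedGraph V E) where
  dir : E → Bool → Bool
  compat : ∀ e, G.sign e = xor (dir e false) (dir e true)

/-- Reverse the orientation on the set of edges where `s e = true`. -/
def SOrientation.reorient {G : SignedGraph V E} (O : SOrientation G) (s : E → Bool) :
    SOrientation G where
  dir := fun e i => xor (s e) (O.dir e i)
  compat := by
    intro e
    have h := O.compat e
    cases hs : s e <;> simp [hs, h]

/-- Kirchhoff's law: at every vertex the sum of the values on incoming
half-edges equals the sum on outgoing half-edges. -/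
def IsFlow [Fintype E] [DecidableEq V] {G : SignedGraph V E} {A : Type} [AddCommGroup A]
    (O : SOrientation G) (f : E → A) : Prop :=
  ∀ v : V,
    (∑ e : E, ∑ i : Bool, if G.ends e i = v ∧ O.dir e i = true then f e else 0)
      = ∑ e : E, ∑ i : Bool, if G.ends e i = v ∧ O.dir e i = false then f e else 0

/-- `G` admits a nowhere-zero integer flow (is flow-admissible). -/
def HasNZFlow [Fintype E] [DecidableEq V] (G : SignedGraph V E) : Prop :=
  ∃ (O : SOrientation G) (φ : E → ℤ), IsFlow O φ ∧ ∀ e, φ e ≠ 0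

/-- `G` admits a nowhere-zero `k`-flow: an integer flow with values in
`{±1, …, ±(k-1)}`. -/
def HasNZkFlow [Fintype E] [DecidableEq V] (G : SignedGraph V E) (k : ℕ) : Prop :=
  ∃ (O : SOrientation G) (φ : E → ℤ), IsFlow O φ ∧ ∀ e, φ e ≠ 0 ∧ (φ e).natAbs ≤ k - 1

/-- A circuit of length `n+1` in `G`: pairwise distinct vertices
`vtx 0, …, vtx n` and pairwise distinct edges, where edge `i` joins `vtx i`
(via its half `half i`) to `vtx (i+1)` (via the other half); indices cyclic. -/
structure Circuit (G : SignedGraph V E) where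
  n : ℕ
  vtx : Fin (n + 1) → V
  edge : Fin (n + 1) → E
  half : Fin (n + 1) → Bool
  vtx_inj : Function.Injective vtx
  edge_inj : Function.Injective edge
  ends_src : ∀ i, G.ends (edge i) (half i) = vtx i
  ends_tgt : ∀ i, G.ends (edge i) (!(half i)) = vtx (i + 1)

/-- Number of edges of a circuit. -/
def Circuit.length {G : SignedGraph V E} (C : Circuit G) : ℕ := C.n + 1

/-- A circuit is balanced if it has an even number of negative edges. -/
def Circuit.Balanced {G : SignedGraph V E} (C : Circuit G) : Prop :=
  Even (Finset.univ.filter (fun i => G.sign (C.edge i) = false)).card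

/-- Consistency of a (raw) bidirection `d` at the vertex `vtx (i+1)` of a
circuit: exactly one of the two half-edges of the circuit at that vertex is
directed toward it. -/
def Circuit.ConsistentAt {G : SignedGraph V E} (C : Circuit G)
    (d : E → Bool → Bool) (i : Fin (C.n + 1)) : Prop :=
  d (C.edge i) (!(C.half i)) ≠ d (C.edge (i + 1)) (C.half (i + 1))

/-- A path of length `m` (possibly trivial, `m = 0`) in `G`. -/
structure GPath (G : SignedGraph V E) where
  m : ℕ
  vtx : Fin (m + 1) → V
  edge : Fin m → E
  half : Fin m → Bool
  vtx_inj : Function.Injective vtx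
  edge_inj : Function.Injective edge
  ends_src : ∀ i, G.ends (edge i) (half i) = vtx i.castSucc
  ends_tgt : ∀ i, G.ends (edge i) (!(half i)) = vtx i.succ

/-- A path is consistently directed (w.r.t. a raw bidirection `d`) if it is
consistent at every internal vertex. -/
def GPath.ConsDir {G : SignedGraph V E} (P : GPath G) (d : E → Bool → Bool) : Prop :=
  ∀ a b : Fin P.m, (a : ℕ) + 1 = (b : ℕ) →
    d (P.edge a) (!(P.half a)) ≠ d (P.edge b) (P.half b)

/-- A trail of length `m`: distinct edges, vertices may repeat. -/
structure Trail (G : SignedGraph V E) where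
  m : ℕ
  vtx : Fin (m + 1) → V
  edge : Fin m → E
  half : Fin m → Bool
  edge_inj : Function.Injective edge
  ends_src : ∀ i, G.ends (edge i) (half i) = vtx i.castSucc
  ends_tgt : ∀ i, G.ends (edge i) (!(half i)) = vtx i.succ

/-- A signed circuit: either a balanced circuit, or an unbalanced bicircuit,
i.e. two unbalanced circuits joined by a (possibly trivial) connecting path
which meets the circuits only at its ends; if the path is trivial the two
circuits share exactly one vertex, otherwise they are vertex-disjoint. -/
inductive SignedCircuit (G : SignedGraph V E) where
  | balanced (C : Circuit G) (hb : C.Balanced)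
  | bicircuit (C₁ C₂ : Circuit G) (P : GPath G)
      (h₁ : ¬ C₁.Balanced) (h₂ : ¬ C₂.Balanced)
      (hstart : P.vtx 0 ∈ Set.range C₁.vtx)
      (hend : P.vtx (Fin.last P.m) ∈ Set.range C₂.vtx)
      (hmeet : ∀ x, x ∈ Set.range C₁.vtx → x ∈ Set.range C₂.vtx →
        P.m = 0 ∧ x = P.vtx 0)
      (hpathint : ∀ k : Fin (P.m + 1), k ≠ 0 → k ≠ Fin.last P.m →
        P.vtx k ∉ Set.range C₁.vtx ∧ P.vtx k ∉ Set.range C₂.vtx)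
      (hedisj : ∀ a b, C₁.edge a ≠ C₂.edge b)
      (hpe₁ : ∀ a b, P.edge a ≠ C₁.edge b)
      (hpe₂ : ∀ a b, P.edge a ≠ C₂.edge b)

namespace SignedCircuit

variable {G : SignedGraph V E}

/-- The edge set of a signed circuit. -/
def edges : SignedCircuit G → Set E
  | balanced C _ => Set.range C.edge
  | bicircuit C₁ C₂ P _ _ _ _ _ _ _ _ _ =>
      Set.range C₁.edge ∪ Set.range C₂.edge ∪ Set.range P.edge

/-- The vertex set of a signed circuit. -/
def vertices : SignedCircuit G → Set V
  | balanced C _ => Set.range C.vtx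
  | bicircuit C₁ C₂ P _ _ _ _ _ _ _ _ _ =>
      Set.range C₁.vtx ∪ Set.range C₂.vtx ∪ Set.range P.vtx

/-- The number of edges (total length) of a signed circuit. -/
def length : SignedCircuit G → ℕ
  | balanced C _ => C.length
  | bicircuit C₁ C₂ P _ _ _ _ _ _ _ _ _ => C₁.length + C₂.length + P.m

/-- Whether a signed circuit is an unbalanced bicircuit. -/
def IsBicircuit : SignedCircuit G → Prop
  | balanced _ _ => False
  | bicircuit _ _ _ _ _ _ _ _ _ _ _ _ => True

/-- The length of the connecting path (`0` for a balanced circuit). -/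
def pathLength : SignedCircuit G → ℕ
  | balanced _ _ => 0
  | bicircuit _ _ P _ _ _ _ _ _ _ _ _ => P.m

open Classical in
/-- The characteristic flow of a signed circuit: `1` on a balanced circuit;
`1` on the connecting path and `1/2` on the two circuits of an unbalanced
bicircuit; `0` elsewhere. -/
noncomputable def chi : SignedCircuit G → E → ℚ
  | balanced C _ => fun e => if e ∈ Set.range C.edge then 1 else 0
  | bicircuit C₁ C₂ P _ _ _ _ _ _ _ _ _ => fun e =>
      if e ∈ Set.range P.edge then 1
      else if e ∈ Set.range C₁.edge ∪ Set.range C₂.edge then 1/2 else 0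

/-- A signed circuit is consistently directed w.r.t. the raw bidirection `d`
if every pair of adjacent edges in it is consistently directed, except at the
faulty vertices: a balanced circuit is consistent everywhere; in an unbalanced
bicircuit each constituent circuit fails to be consistent exactly at the
end-vertex of the connecting path lying on it, while the path itself, and the
junctions of the path (resp. of the other circuit, if the path is trivial)
with the circuits, are consistent. -/
def ConsistentlyDirected (d : E → Bool → Bool) : SignedCircuit G → Prop
  | balanced C _ => ∀ i, C.ConsistentAt d i
  | bicircuit C₁ C₂ P _ _ _ _ _ _ _ _ _ =>
      (∀ i, C₁.vtx (i + 1) ≠ P.vtx 0 → C₁.ConsistentAt d i) ∧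
      (∀ i, C₁.vtx (i + 1) = P.vtx 0 → ¬ C₁.ConsistentAt d i) ∧
      (∀ i, C₂.vtx (i + 1) ≠ P.vtx (Fin.last P.m) → C₂.ConsistentAt d i) ∧
      (∀ i, C₂.vtx (i + 1) = P.vtx (Fin.last P.m) → ¬ C₂.ConsistentAt d i) ∧
      P.ConsDir d ∧
      (∀ k : Fin P.m, (k : ℕ) = 0 → ∀ j, C₁.vtx (j + 1) = P.vtx 0 →
        d (P.edge k) (P.half k) ≠ d (C₁.edge j) (!(C₁.half j))) ∧
      (∀ k : Fin P.m, (k : ℕ) + 1 = P.m → ∀ j, C₂.vtx (j + 1) = P.vtx (Fin.last P.m) →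
        d (P.edge k) (!(P.half k)) ≠ d (C₂.edge j) (!(C₂.half j))) ∧
      (P.m = 0 → ∀ j₁ j₂, C₁.vtx (j₁ + 1) = P.vtx 0 → C₂.vtx (j₂ + 1) = P.vtx 0 →
        d (C₁.edge j₁) (!(C₁.half j₁)) ≠ d (C₂.edge j₂) (!(C₂.half j₂)))

end SignedCircuit

/-- Switching a signed graph at a vertex `v`: the signs of all non-loop edges
incident with `v` are negated (endpoints are unchanged). -/
def SignedGraph.switch [DecidableEq V] (G : SignedGraph V E) (v : V) : SignedGraph V E where
  ends := G.ends
  sign := fun e =>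
    if (G.ends e false = v ∨ G.ends e true = v) ∧ G.ends e false ≠ G.ends e true
    then !(G.sign e) else G.sign e

/-- A circuit of `G` is also a circuit of the switched graph. -/
def Circuit.ofSwitch [DecidableEq V] {G : SignedGraph V E} (v : V) (C : Circuit G) :
    Circuit (G.switch v) :=
  ⟨C.n, C.vtx, C.edge, C.half, C.vtx_inj, C.edge_inj, C.ends_src, C.ends_tgt⟩
namespace SCAux

open Finset

def sg (b : Bool) : ℤ := if b then 1 else -1

lemma sg_ne (b : Bool) : sg b ≠ 0 := by cases b <;> simp [sg]

lemma sg_not (b : Bool) : sg (!b) = - sg b := by cases b <;> simp [sg]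

lemma zero_iff_of_pair {x y : ℤ} {a b : Bool} (h : sg a * x + sg b * y = 0) :
    (x = 0 ↔ y = 0) := by
  cases a <;> cases b <;> simp [sg] at h <;> omega

lemma zero_of_pair_right {x y : ℤ} {a b : Bool} (h : sg a * x + sg b * y = 0)
    (hy : y = 0) : x = 0 := ((zero_iff_of_pair h).2 hy)

variable {V E : Type}

lemma isFlow_iff [Fintype E] [DecidableEq V] {G : SignedGraph V E}
    (O : SOrientation G) (φ : E → ℤ) :
    IsFlow O φ ↔ ∀ v, (∑ e : E, ∑ i : Bool,
      if G.ends e i = v then sg (O.dir e i) * φ e else 0) = 0 := by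
  unfold IsFlow
  refine forall_congr' fun v => ?_
  have key : ∀ e i, (if G.ends e i = v then sg (O.dir e i) * φ e else 0)
      = (if G.ends e i = v ∧ O.dir e i = true then φ e else 0)
        - (if G.ends e i = v ∧ O.dir e i = false then φ e else 0) := by
    intro e i
    by_cases h : G.ends e i = v <;> cases hd : O.dir e i <;> simp [h, hd, sg]
  rw [← sub_eq_zero]
  simp only [key, Finset.sum_sub_distrib]

lemma boolPair (F : Bool → ℤ) (h : Bool) : (∑ i : Bool, F i) = F h + F (!h) := by
  cases h <;> simp [Fintype.sum_bool] <;> ring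

end SCAux
namespace SCAux

open Finset

variable {V E : Type} {G : SignedGraph V E}

lemma circSum [Fintype E] [DecidableEq V] (C : Circuit G)
    (d : E → Bool → Bool) (φ : E → ℤ) (v : V) :
    (∑ k : Fin (C.n+1), ∑ i : Bool,
        if G.ends (C.edge k) i = v then sg (d (C.edge k) i) * φ (C.edge k) else 0)
    = ∑ k : Fin (C.n+1), (if C.vtx k = v then
        sg (d (C.edge k) (C.half k)) * φ (C.edge k)
        + sg (d (C.edge (k-1)) (!(C.half (k-1)))) * φ (C.edge (k-1)) else 0) := by
  have step1 : ∀ k : Fin (C.n+1), (∑ i : Bool,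
      if G.ends (C.edge k) i = v then sg (d (C.edge k) i) * φ (C.edge k) else 0)
      = (if C.vtx k = v then sg (d (C.edge k) (C.half k)) * φ (C.edge k) else 0)
        + (if C.vtx (k+1) = v then sg (d (C.edge k) (!(C.half k))) * φ (C.edge k) else 0) := by
    intro k
    rw [boolPair _ (C.half k), C.ends_src k, C.ends_tgt k]
  simp only [step1]
  rw [Finset.sum_add_distrib]
  have step2 : (∑ k : Fin (C.n+1),
      if C.vtx (k+1) = v then sg (d (C.edge k) (!(C.half k))) * φ (C.edge k) else 0)
      = ∑ k : Fin (C.n+1),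
      if C.vtx k = v then sg (d (C.edge (k-1)) (!(C.half (k-1)))) * φ (C.edge (k-1)) else 0 := by
    apply Fintype.sum_equiv (Equiv.addRight (1 : Fin (C.n+1)))
    intro k
    simp [Equiv.coe_addRight]
  rw [step2, ← Finset.sum_add_distrib]
  apply Finset.sum_congr rfl
  intro k _
  by_cases h : C.vtx k = v <;> simp [h]

lemma sum_vtx_eq [Fintype E] [DecidableEq V] (C : Circuit G) (f : Fin (C.n+1) → ℤ) (j : Fin (C.n+1)) :
    (∑ k : Fin (C.n+1), if C.vtx k = C.vtx j then f k else 0) = f j := by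
  rw [Finset.sum_eq_single j]
  · simp
  · intro k _ hk
    have : C.vtx k ≠ C.vtx j := fun h => hk (C.vtx_inj h)
    simp [this]
  · intro h; exact absurd (Finset.mem_univ j) h

lemma sum_vtx_zero [Fintype E] [DecidableEq V] (C : Circuit G) (f : Fin (C.n+1) → ℤ) {v : V}
    (hv : v ∉ Set.range C.vtx) :
    (∑ k : Fin (C.n+1), if C.vtx k = v then f k else 0) = 0 := by
  apply Finset.sum_eq_zero
  intro k _
  have : C.vtx k ≠ v := fun h => hv ⟨k, h⟩
  simp [this]

lemma pathSum [Fintype E] [DecidableEq V] (P : GPath G)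
    (d : E → Bool → Bool) (φ : E → ℤ) (v : V) :
    (∑ k : Fin P.m, ∑ i : Bool,
        if G.ends (P.edge k) i = v then sg (d (P.edge k) i) * φ (P.edge k) else 0)
    = ∑ k : Fin P.m, ((if P.vtx k.castSucc = v then sg (d (P.edge k) (P.half k)) * φ (P.edge k) else 0)
        + (if P.vtx k.succ = v then sg (d (P.edge k) (!(P.half k))) * φ (P.edge k) else 0)) := by
  apply Finset.sum_congr rfl
  intro k _
  rw [boolPair _ (P.half k), P.ends_src k, P.ends_tgt k]

lemma pathSum_fst [Fintype E] [DecidableEq V] (P : GPath G) (g : Fin P.m → ℤ) (t : Fin (P.m+1)) :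
    (∑ k : Fin P.m, if P.vtx k.castSucc = P.vtx t then g k else 0)
    = if h : (t:ℕ) < P.m then g ⟨t, h⟩ else 0 := by
  split
  · rename_i h
    rw [Finset.sum_eq_single ⟨(t:ℕ), h⟩]
    · have : (⟨(t:ℕ), h⟩ : Fin P.m).castSucc = t := by ext; simp
      simp [this]
    · intro k _ hk
      have : P.vtx k.castSucc ≠ P.vtx t := by
        intro hh
        apply hk
        have := P.vtx_inj hh
        ext
        simpa [Fin.castSucc] using congrArg Fin.val this
      simp [this]
    · intro h; exact absurd (Finset.mem_univ _) h
  · rename_i h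
    apply Finset.sum_eq_zero
    intro k _
    have : P.vtx k.castSucc ≠ P.vtx t := by
      intro hh
      have := congrArg Fin.val (P.vtx_inj hh)
      simp at this
      omega
    simp [this]

lemma pathSum_snd [Fintype E] [DecidableEq V] (P : GPath G) (g : Fin P.m → ℤ) (t : Fin (P.m+1)) :
    (∑ k : Fin P.m, if P.vtx k.succ = P.vtx t then g k else 0)
    = if h : 0 < (t:ℕ) then g ⟨(t:ℕ)-1, by omega⟩ else 0 := by
  split
  · rename_i h
    have hlt : (t:ℕ) - 1 < P.m := by omega
    rw [Finset.sum_eq_single ⟨(t:ℕ)-1, hlt⟩]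
    · have : (⟨(t:ℕ)-1, hlt⟩ : Fin P.m).succ = t := by ext; simp; omega
      simp [this]
    · intro k _ hk
      have : P.vtx k.succ ≠ P.vtx t := by
        intro hh
        apply hk
        have := congrArg Fin.val (P.vtx_inj hh)
        simp [Fin.val_succ] at this
        ext; simp; omega
      simp [this]
    · intro h; exact absurd (Finset.mem_univ _) h
  · rename_i h
    apply Finset.sum_eq_zero
    intro k _
    have : P.vtx k.succ ≠ P.vtx t := by
      intro hh
      have := congrArg Fin.val (P.vtx_inj hh)
      simp [Fin.val_succ] at this
      omega
    simp [this]

lemma pathSum_zero [Fintype E] [DecidableEq V] (P : GPath G) (g : Fin P.m → ℤ) {v : V}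
    (hv : v ∉ Set.range P.vtx)
    (idx : Fin P.m → Fin (P.m+1)) :
    (∑ k : Fin P.m, if P.vtx (idx k) = v then g k else 0) = 0 := by
  apply Finset.sum_eq_zero
  intro k _
  have : P.vtx (idx k) ≠ v := fun h => hv ⟨idx k, h⟩
  simp [this]

end SCAux
namespace SCAux

open Finset
open Fin.NatCast Fin.CommRing

def aSeq (s : ℕ → Bool) : ℕ → Bool
  | 0 => false
  | k+1 => xor (aSeq s k) (!(s k))

lemma aSeq_parity (s : ℕ → Bool) (M : ℕ) :
    aSeq s M = true ↔ Odd (((Finset.range M).filter (fun t => s t = false)).card) := by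
  induction M with
  | zero => simp [aSeq]
  | succ M ih =>
    have hstep : aSeq s (M+1) = xor (aSeq s M) (!(s M)) := rfl
    rw [Finset.range_add_one, Finset.filter_insert]
    cases hs : s M
    · rw [if_pos rfl, Finset.card_insert_of_notMem (by simp)]
      rw [hstep, hs, Nat.odd_add_one, ← ih]
      cases aSeq s M <;> simp
    · rw [if_neg (by simp)]
      rw [hstep, hs, ← ih]
      cases aSeq s M <;> simp

variable {V E : Type} {G : SignedGraph V E}

/-- Direction sequence around a circuit, based at `p` with base value `β`. -/
def cdirA (C : Circuit G) (p : Fin (C.n+1)) (β : Bool) (k : Fin (C.n+1)) : Bool :=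
  xor β (aSeq (fun t => G.sign (C.edge (((t:ℕ) : Fin (C.n+1)) + p))) ((k - p : Fin (C.n+1)) : ℕ))

lemma fin_last_eq_neg_one {n : ℕ} : (Fin.last n : Fin (n+1)) = -1 :=
  eq_neg_of_add_eq_zero_left (Fin.last_add_one n)

lemma cdirA_base (C : Circuit G) (p : Fin (C.n+1)) (β : Bool) : cdirA C p β p = β := by
  simp [cdirA, aSeq]

lemma cdirA_step (C : Circuit G) (p : Fin (C.n+1)) (β : Bool) (k : Fin (C.n+1))
    (hk : k + 1 ≠ p) :
    cdirA C p β (k+1) = xor (cdirA C p β k) (!(G.sign (C.edge k))) := by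
  set t : Fin (C.n+1) := k - p with ht
  have htl : t ≠ Fin.last C.n := by
    intro h
    apply hk
    have hkk : k = Fin.last C.n + p := by rw [← h, ht]; ring
    rw [hkk, fin_last_eq_neg_one]; ring
  have h1 : k + 1 - p = t + 1 := by rw [ht]; ring
  have h2 : ((t + 1 : Fin (C.n+1)) : ℕ) = (t : ℕ) + 1 :=
    Fin.val_add_one_of_lt (Fin.lt_last_iff_ne_last.mpr htl)
  have h3 : ((t : ℕ) : Fin (C.n+1)) = t := Fin.cast_val_eq_self t
  simp only [cdirA, h1, h2, aSeq, ← ht]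
  rw [h3]
  have h4 : t + p = k := by rw [ht]; ring
  rw [h4]
  cases β <;> simp [Bool.xor_assoc]

lemma cdirA_back (C : Circuit G) (p : Fin (C.n+1)) (β : Bool) :
    xor (cdirA C p β (p - 1)) (G.sign (C.edge (p-1)))
      = xor β (!(aSeq (fun t => G.sign (C.edge (((t:ℕ):Fin (C.n+1)) + p))) (C.n + 1))) := by
  have h1 : (p - 1 - p : Fin (C.n+1)) = Fin.last C.n := by rw [fin_last_eq_neg_one]; ring
  have h3 : (((C.n : ℕ)) : Fin (C.n+1)) + p = p - 1 := by
    have h : (((C.n : ℕ)) : Fin (C.n+1)) = Fin.last C.n := by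
      ext; simp [Fin.val_cast_of_lt (Nat.lt_succ_self C.n)]
    rw [h, fin_last_eq_neg_one]; ring
  unfold cdirA
  rw [h1]
  have h2 : ((Fin.last C.n : Fin (C.n+1)) : ℕ) = C.n := rfl
  rw [h2]
  have hrec : aSeq (fun t => G.sign (C.edge (((t:ℕ):Fin (C.n+1)) + p))) (C.n + 1)
      = xor (aSeq (fun t => G.sign (C.edge (((t:ℕ):Fin (C.n+1)) + p))) C.n)
          (!(G.sign (C.edge (((C.n:ℕ):Fin (C.n+1)) + p)))) := rfl
  rw [hrec, h3]
  generalize aSeq (fun t => G.sign (C.edge (((t:ℕ):Fin (C.n+1)) + p))) C.n = A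
  generalize G.sign (C.edge (p-1)) = S
  cases β <;> cases A <;> cases S <;> rfl

lemma shift_card (C : Circuit G) (p : Fin (C.n+1)) :
    (((Finset.range (C.n+1)).filter
        (fun t => G.sign (C.edge (((t:ℕ) : Fin (C.n+1)) + p)) = false)).card)
    = ((Finset.univ.filter (fun i => G.sign (C.edge i) = false)).card) := by
  apply Finset.card_bij (fun (t : ℕ) (_ : t ∈ _) => ((t : Fin (C.n+1)) + p))
  · intro t ht
    simp only [Finset.mem_filter] at ht ⊢
    exact ⟨Finset.mem_univ _, ht.2⟩
  · intro a ha b hb hab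
    simp only [Finset.mem_filter, Finset.mem_range] at ha hb
    have h := congrArg (fun x => x - p) hab
    simp only [add_sub_cancel_right] at h
    have h2 := congrArg Fin.val h
    rwa [Fin.val_cast_of_lt ha.1, Fin.val_cast_of_lt hb.1] at h2
  · intro i hi
    refine ⟨((i - p : Fin (C.n+1)) : ℕ), ?_, ?_⟩
    · simp only [Finset.mem_filter, Finset.mem_range]
      refine ⟨(i - p).isLt, ?_⟩
      rw [Fin.cast_val_eq_self, sub_add_cancel]
      simp only [Finset.mem_filter] at hi
      exact hi.2
    · rw [Fin.cast_val_eq_self, sub_add_cancel]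

lemma cdirA_wrap_bal (C : Circuit G) (p : Fin (C.n+1)) (β : Bool) (hb : C.Balanced) :
    xor (cdirA C p β (p - 1)) (G.sign (C.edge (p-1))) = !β := by
  rw [cdirA_back]
  have hp := aSeq_parity (fun t => G.sign (C.edge (((t:ℕ) : Fin (C.n+1)) + p))) (C.n+1)
  rw [shift_card] at hp
  have : aSeq (fun t => G.sign (C.edge (((t:ℕ) : Fin (C.n+1)) + p))) (C.n+1) = false := by
    rw [← Bool.not_eq_true, hp, Nat.not_odd_iff_even]
    exact hb
  rw [this]
  cases β <;> rfl

lemma cdirA_wrap_unbal (C : Circuit G) (p : Fin (C.n+1)) (β : Bool) (hb : ¬ C.Balanced) :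
    xor (cdirA C p β (p - 1)) (G.sign (C.edge (p-1))) = β := by
  rw [cdirA_back]
  have hp := aSeq_parity (fun t => G.sign (C.edge (((t:ℕ) : Fin (C.n+1)) + p))) (C.n+1)
  rw [shift_card] at hp
  have : aSeq (fun t => G.sign (C.edge (((t:ℕ) : Fin (C.n+1)) + p))) (C.n+1) = true := by
    rw [hp, ← Nat.not_even_iff_odd]
    exact hb
  rw [this]
  cases β <;> rfl

end SCAux
namespace SCAux

open Finset
open Fin.NatCast Fin.CommRing

variable {V E : Type} {G : SignedGraph V E}

def crel [Fintype E] (C : Circuit G) (O : SOrientation G) (φ : E → ℤ)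
    (j : Fin (C.n+1)) : Prop :=
  sg (O.dir (C.edge j) (C.half j)) * φ (C.edge j)
    + sg (O.dir (C.edge (j-1)) (!(C.half (j-1)))) * φ (C.edge (j-1)) = 0

lemma crel_iff [Fintype E] {C : Circuit G} {O : SOrientation G} {φ : E → ℤ}
    {j : Fin (C.n+1)} (h : crel C O φ j) :
    (φ (C.edge j) = 0 ↔ φ (C.edge (j-1)) = 0) := zero_iff_of_pair h

lemma natCast_fin_succ {n : ℕ} (d : ℕ) : ((d+1 : ℕ) : Fin (n+1)) = ((d:ℕ) : Fin (n+1)) + 1 := by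
  push_cast; ring

lemma chain_zero [Fintype E] (C : Circuit G) (O : SOrientation G) (φ : E → ℤ)
    (p : Fin (C.n+1)) (hrel : ∀ j, j ≠ p → crel C O φ j)
    (k : Fin (C.n+1)) (hk : φ (C.edge k) = 0) :
    ∀ j, φ (C.edge j) = 0 := by
  have iter : ∀ d : ℕ, d ≤ C.n → (φ (C.edge (p + (d : Fin (C.n+1)))) = 0 ↔ φ (C.edge p) = 0) := by
    intro d hd
    induction d with
    | zero => simp
    | succ d ih =>
      have hne : (p + ((d+1 : ℕ) : Fin (C.n+1))) ≠ p := by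
        intro h
        have h2 : ((d+1 : ℕ) : Fin (C.n+1)) = 0 := by
          have h3 := congrArg (fun x => x - p) h
          simpa [add_comm, add_sub_cancel_right] using h3
        have h4 := congrArg Fin.val h2
        rw [Fin.val_cast_of_lt (by omega)] at h4
        simp at h4
      have hrec := crel_iff (hrel _ hne)
      have hsub : p + ((d+1 : ℕ) : Fin (C.n+1)) - 1 = p + ((d : ℕ) : Fin (C.n+1)) := by
        rw [natCast_fin_succ]; ring
      rw [hsub] at hrec
      exact hrec.trans (ih (by omega))
  have hp0 : φ (C.edge p) = 0 := by
    have h1 := iter ((k - p : Fin (C.n+1)) : ℕ) (by omega)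
    rw [Fin.cast_val_eq_self, add_sub_cancel] at h1
    exact h1.mp hk
  intro j
  have h1 := iter ((j - p : Fin (C.n+1)) : ℕ) (by omega)
  rw [Fin.cast_val_eq_self, add_sub_cancel] at h1
  exact h1.mpr hp0

lemma xor_half (d : Bool → Bool) (h : Bool) : xor (d h) (d (!h)) = xor (d false) (d true) := by
  cases h <;> simp [Bool.xor_comm]

lemma pair_to_step {x y : ℤ} {u w : Bool} (h : sg u * x + sg w * y = 0) :
    x = (if u = w then -1 else 1) * y := by
  cases u <;> cases w <;> simp [sg] at h ⊢ <;> omega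

lemma unbalanced_zero [Fintype E] (C : Circuit G) (O : SOrientation G) (φ : E → ℤ)
    (hub : ¬ C.Balanced) (hrel : ∀ j, crel C O φ j) :
    ∀ j, φ (C.edge j) = 0 := by
  classical
  have hab : ∀ j : Fin (C.n+1),
      xor (O.dir (C.edge j) (C.half j)) (O.dir (C.edge j) (!(C.half j))) = G.sign (C.edge j) := by
    intro j
    rw [xor_half (O.dir (C.edge j)) (C.half j)]
    exact (O.compat (C.edge j)).symm
  set c : Fin (C.n+1) → ℤ := fun j =>
    if O.dir (C.edge j) (C.half j) = O.dir (C.edge (j-1)) (!(C.half (j-1))) then -1 else 1 with hc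
  have step : ∀ j, φ (C.edge j) = c j * φ (C.edge (j-1)) := fun j => pair_to_step (hrel j)
  have iter : ∀ d : ℕ, φ (C.edge ((d : Fin (C.n+1)))) =
      (∏ i ∈ Finset.range d, c ((i : Fin (C.n+1)) + 1)) * φ (C.edge 0) := by
    intro d
    induction d with
    | zero => simp
    | succ d ih =>
      rw [natCast_fin_succ, step (((d:ℕ) : Fin (C.n+1)) + 1), add_sub_cancel_right, ih,
        Finset.prod_range_succ]
      ring
  have hwrap := iter (C.n + 1)
  rw [show (((C.n + 1 : ℕ)) : Fin (C.n+1)) = 0 from by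
    ext; simp [Fin.val_cast_of_lt]] at hwrap
  have hprod : (∏ i ∈ Finset.range (C.n+1), c ((i : Fin (C.n+1)) + 1)) = ∏ j : Fin (C.n+1), c j := by
    rw [← Fin.prod_univ_eq_prod_range (fun i => c ((i : Fin (C.n+1)) + 1)) (C.n+1)]
    apply Fintype.prod_equiv (Equiv.addRight (1 : Fin (C.n+1)))
    intro i
    rw [Fin.cast_val_eq_self]
    rfl
  rw [hprod] at hwrap
  have hparity : Odd ((Finset.univ.filter (fun j : Fin (C.n+1) =>
      O.dir (C.edge j) (C.half j) = O.dir (C.edge (j-1)) (!(C.half (j-1))))).card) := by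
    have key : (((Finset.univ.filter (fun j : Fin (C.n+1) =>
        O.dir (C.edge j) (C.half j) = O.dir (C.edge (j-1)) (!(C.half (j-1))))).card : ZMod 2))
        = (((Finset.univ.filter (fun j : Fin (C.n+1) => G.sign (C.edge j) = false)).card : ZMod 2)) := by
      rw [Finset.card_filter, Finset.card_filter]
      push_cast
      have e1 : ∀ j : Fin (C.n+1), (if O.dir (C.edge j) (C.half j) = O.dir (C.edge (j-1)) (!(C.half (j-1))) then (1:ZMod 2) else 0)
          = 1 + (if O.dir (C.edge j) (C.half j) then 1 else 0) + (if O.dir (C.edge (j-1)) (!(C.half (j-1))) then 1 else 0) := by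
        intro j
        cases h1 : O.dir (C.edge j) (C.half j) <;> cases h2 : O.dir (C.edge (j-1)) (!(C.half (j-1))) <;> simp [h1, h2] <;> decide
      have e2 : ∀ j : Fin (C.n+1), (if G.sign (C.edge j) = false then (1:ZMod 2) else 0)
          = 1 + (if O.dir (C.edge j) (C.half j) then 1 else 0) + (if O.dir (C.edge j) (!(C.half j)) then 1 else 0) := by
        intro j
        rw [← hab j]
        cases h1 : O.dir (C.edge j) (C.half j) <;> cases h2 : O.dir (C.edge j) (!(C.half j)) <;> simp [h1, h2] <;> decide
      simp only [e1, e2, Finset.sum_add_distrib]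
      congr 1
      apply Fintype.sum_equiv (Equiv.subRight (1 : Fin (C.n+1)))
      intro j
      rfl
    have hS : Odd ((Finset.univ.filter (fun j : Fin (C.n+1) => G.sign (C.edge j) = false)).card) :=
      Nat.not_even_iff_odd.mp hub
    rw [Nat.odd_iff] at hS ⊢
    have := (ZMod.natCast_eq_natCast_iff _ _ _).mp key
    unfold Nat.ModEq at this
    omega
  have hcprod : (∏ j : Fin (C.n+1), c j) = -1 := by
    rw [hc, Finset.prod_ite, Finset.prod_const, Finset.prod_const_one, mul_one]
    exact Odd.neg_one_pow hparity
  rw [hcprod] at hwrap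
  have h0 : φ (C.edge 0) = 0 := by omega
  intro j
  have := iter (j : ℕ)
  rw [Fin.cast_val_eq_self, h0, mul_zero] at this
  exact this

end SCAux
namespace SCAux

open Finset
open Fin.NatCast Fin.CommRing

variable {V E : Type} {G : SignedGraph V E}

lemma sum_split [Fintype E] (C₁ C₂ : Circuit G) (P : GPath G)
    (hbij : Function.Bijective (Sum.elim C₁.edge (Sum.elim C₂.edge P.edge)))
    (F : E → ℤ) :
    (∑ e : E, F e) = (∑ k, F (C₁.edge k)) + (∑ k, F (C₂.edge k)) + (∑ k, F (P.edge k)) := by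
  rw [← Fintype.sum_bijective _ hbij _ F (fun x => rfl)]
  rw [Fintype.sum_sum_type, Fintype.sum_sum_type]
  simp [add_assoc]

lemma elim_bij [Fintype E] (C₁ C₂ : Circuit G) (P : GPath G)
    (hcov : Set.range C₁.edge ∪ Set.range C₂.edge ∪ Set.range P.edge = Set.univ)
    (hedisj : ∀ a b, C₁.edge a ≠ C₂.edge b)
    (hpe₁ : ∀ a b, P.edge a ≠ C₁.edge b)
    (hpe₂ : ∀ a b, P.edge a ≠ C₂.edge b) :
    Function.Bijective (Sum.elim C₁.edge (Sum.elim C₂.edge P.edge)) := by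
  constructor
  · rintro (a|a|a) (b|b|b) h <;> simp only [Sum.elim_inl, Sum.elim_inr] at h
    · exact congrArg Sum.inl (C₁.edge_inj h)
    · exact absurd h (hedisj a b)
    · exact absurd h.symm (hpe₁ b a)
    · exact absurd h.symm (hedisj b a)
    · exact congrArg _ (congrArg Sum.inl (C₂.edge_inj h))
    · exact absurd h.symm (hpe₂ b a)
    · exact absurd h (hpe₁ a b)
    · exact absurd h (hpe₂ a b)
    · exact congrArg _ (congrArg Sum.inr (P.edge_inj h))
  · intro e
    have he : e ∈ Set.range C₁.edge ∪ Set.range C₂.edge ∪ Set.range P.edge := by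
      rw [hcov]; trivial
    rcases he with (⟨k, hk⟩ | ⟨k, hk⟩) | ⟨k, hk⟩
    · exact ⟨Sum.inl k, hk⟩
    · exact ⟨Sum.inr (Sum.inl k), hk⟩
    · exact ⟨Sum.inr (Sum.inr k), hk⟩

lemma pair_vanish (C : Circuit G) (p : Fin (C.n+1)) (β : Bool) (k : Fin (C.n+1)) (hk : k ≠ p) :
    sg (cdirA C p β k) + sg (xor (cdirA C p β (k-1)) (G.sign (C.edge (k-1)))) = 0 := by
  have hstep := cdirA_step C p β (k-1) (by rwa [sub_add_cancel])
  rw [sub_add_cancel] at hstep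
  rw [hstep, Bool.xor_not, sg_not]
  ring

lemma circT_eval_bal [Fintype E] [DecidableEq V] (C : Circuit G) (O : SOrientation G)
    (φ : E → ℤ) (p : Fin (C.n+1)) (β : Bool)
    (hdir1 : ∀ k, O.dir (C.edge k) (C.half k) = cdirA C p β k)
    (hdir2 : ∀ k, O.dir (C.edge k) (!(C.half k)) = xor (cdirA C p β k) (G.sign (C.edge k)))
    (hφ : ∀ k, φ (C.edge k) = 1) (hb : C.Balanced) (v : V) :
    (∑ k, if C.vtx k = v then sg (O.dir (C.edge k) (C.half k)) * φ (C.edge k)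
       + sg (O.dir (C.edge (k-1)) (!(C.half (k-1)))) * φ (C.edge (k-1)) else 0) = 0 := by
  apply Finset.sum_eq_zero
  intro k _
  rw [hdir1, hdir2, hφ, hφ, mul_one, mul_one]
  by_cases hk : k = p
  · rw [hk]
    rw [cdirA_base, cdirA_wrap_bal C p β hb]
    split
    · cases β <;> simp [sg]
    · rfl
  · rw [pair_vanish C p β k hk]
    split <;> rfl

lemma circT_eval_unbal [Fintype E] [DecidableEq V] (C : Circuit G) (O : SOrientation G)
    (φ : E → ℤ) (p : Fin (C.n+1)) (β : Bool)
    (hdir1 : ∀ k, O.dir (C.edge k) (C.half k) = cdirA C p β k)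
    (hdir2 : ∀ k, O.dir (C.edge k) (!(C.half k)) = xor (cdirA C p β k) (G.sign (C.edge k)))
    (hφ : ∀ k, φ (C.edge k) = 1) (hb : ¬ C.Balanced) (v : V) :
    (∑ k, if C.vtx k = v then sg (O.dir (C.edge k) (C.half k)) * φ (C.edge k)
       + sg (O.dir (C.edge (k-1)) (!(C.half (k-1)))) * φ (C.edge (k-1)) else 0)
    = if C.vtx p = v then 2 * sg β else 0 := by
  rw [Finset.sum_eq_single p]
  · rw [hdir1, hdir2, hφ, hφ, mul_one, mul_one, cdirA_base, cdirA_wrap_unbal C p β hb]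
    split
    · ring
    · rfl
  · intro k _ hk
    rw [hdir1, hdir2, hφ, hφ, mul_one, mul_one, pair_vanish C p β k hk]
    split <;> rfl
  · intro h; exact absurd (Finset.mem_univ _) h

lemma balanced_flow [Fintype E] [DecidableEq V] (C : Circuit G) (hb : C.Balanced)
    (hsurj : Function.Surjective C.edge) : HasNZFlow G := by
  classical
  have hbij : Function.Bijective C.edge := ⟨C.edge_inj, hsurj⟩
  let eb : Fin (C.n+1) ≃ E := Equiv.ofBijective C.edge hbij
  have hsymm : ∀ k, eb.symm (C.edge k) = k := fun k => by
    rw [Equiv.symm_apply_eq]; rfl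
  set A : Fin (C.n+1) → Bool := cdirA C 0 true with hA
  set d : E → Bool → Bool := fun e i => if i = C.half (eb.symm e) then A (eb.symm e)
      else xor (A (eb.symm e)) (G.sign e) with hd
  have hcompat : ∀ e, G.sign e = xor (d e false) (d e true) := by
    intro e
    rw [hd]
    simp only []
    cases hh : C.half (eb.symm e) <;>
      cases hA2 : A (eb.symm e) <;> cases hs : G.sign e <;> simp [hh, hA2, hs]
  let O0 : SOrientation G := ⟨d, hcompat⟩
  refine ⟨O0, fun _ => 1, ?_, fun e => one_ne_zero⟩
  have hdir1 : ∀ k, O0.dir (C.edge k) (C.half k) = cdirA C 0 true k := by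
    intro k
    show (if C.half k = C.half (eb.symm (C.edge k)) then A (eb.symm (C.edge k))
      else xor (A (eb.symm (C.edge k))) (G.sign (C.edge k))) = _
    rw [hsymm, if_pos rfl]
  have hdir2 : ∀ k, O0.dir (C.edge k) (!(C.half k))
      = xor (cdirA C 0 true k) (G.sign (C.edge k)) := by
    intro k
    show (if (!(C.half k)) = C.half (eb.symm (C.edge k)) then A (eb.symm (C.edge k))
      else xor (A (eb.symm (C.edge k))) (G.sign (C.edge k))) = _
    rw [hsymm, if_neg (by cases C.half k <;> simp)]
  rw [isFlow_iff]
  intro v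
  rw [← Fintype.sum_bijective C.edge hbij
    (fun k => ∑ i : Bool, if G.ends (C.edge k) i = v then sg (O0.dir (C.edge k) i) * 1 else 0)
    (fun e => ∑ i : Bool, if G.ends e i = v then sg (O0.dir e i) * 1 else 0) (fun x => rfl)]
  rw [circSum C O0.dir (fun _ => 1) v]
  exact circT_eval_bal C O0 (fun _ => 1) 0 true hdir1 hdir2 (fun _ => rfl) hb v

lemma balanced_part2 [Fintype E] [DecidableEq V] (C : Circuit G)
    (hsurj : Function.Surjective C.edge) (S : Set E) (hne : S.Nonempty) (hnu : S ≠ Set.univ) :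
    ¬ ∃ (O : SOrientation G) (φ : E → ℤ), IsFlow O φ ∧ ∀ e, (φ e ≠ 0 ↔ e ∈ S) := by
  classical
  rintro ⟨O, φ, hf, hS⟩
  have hbij : Function.Bijective C.edge := ⟨C.edge_inj, hsurj⟩
  have hT := (isFlow_iff O φ).mp hf
  have hrel : ∀ j, crel C O φ j := by
    intro j
    have h := hT (C.vtx j)
    rw [← Fintype.sum_bijective C.edge hbij _ _ (fun x => rfl), circSum C O.dir φ _,
      sum_vtx_eq C _ j] at h
    exact h
  obtain ⟨e0, he0⟩ := (Set.ne_univ_iff_exists_notMem S).mp hnu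
  have hz : φ e0 = 0 := by
    by_contra h
    exact he0 ((hS e0).mp h)
  obtain ⟨k0, hk0⟩ := hsurj e0
  have hall := chain_zero C O φ k0 (fun j _ => hrel j) k0 (hk0.symm ▸ hz)
  obtain ⟨e1, he1⟩ := hne
  obtain ⟨k1, hk1⟩ := hsurj e1
  exact ((hS e1).mpr he1) (hk1 ▸ hall k1)

end SCAux
namespace SCAux

open Finset

variable {V E : Type} {G : SignedGraph V E}

lemma bicircuit_flow [Fintype E] [DecidableEq V] (C₁ C₂ : Circuit G) (P : GPath G)
    (h₁ : ¬ C₁.Balanced) (h₂ : ¬ C₂.Balanced)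
    (p₁ : Fin (C₁.n+1)) (hp₁ : C₁.vtx p₁ = P.vtx 0)
    (p₂ : Fin (C₂.n+1)) (hp₂ : C₂.vtx p₂ = P.vtx (Fin.last P.m))
    (hbij : Function.Bijective (Sum.elim C₁.edge (Sum.elim C₂.edge P.edge))) :
    HasNZFlow G := by
  classical
  let eh : (Fin (C₁.n+1) ⊕ (Fin (C₂.n+1) ⊕ Fin P.m)) ≃ E := Equiv.ofBijective _ hbij
  have hsym1 : ∀ k, eh.symm (C₁.edge k) = Sum.inl k := fun k => by
    rw [Equiv.symm_apply_eq]; rfl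
  have hsym2 : ∀ k, eh.symm (C₂.edge k) = Sum.inr (Sum.inl k) := fun k => by
    rw [Equiv.symm_apply_eq]; rfl
  have hsym3 : ∀ k, eh.symm (P.edge k) = Sum.inr (Sum.inr k) := fun k => by
    rw [Equiv.symm_apply_eq]; rfl
  set sP : ℕ → Bool := fun t => if h : t < P.m then G.sign (P.edge ⟨t, h⟩) else true with hsP
  set β₂ : Bool := aSeq sP P.m with hβ₂
  set A₁ : Fin (C₁.n+1) → Bool := cdirA C₁ p₁ true with hA₁
  set A₂ : Fin (C₂.n+1) → Bool := cdirA C₂ p₂ β₂ with hA₂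
  set D : (Fin (C₁.n+1) ⊕ (Fin (C₂.n+1) ⊕ Fin P.m)) → Bool → Bool := fun x i =>
    match x with
    | Sum.inl k => if i = C₁.half k then A₁ k else xor (A₁ k) (G.sign (C₁.edge k))
    | Sum.inr (Sum.inl k) => if i = C₂.half k then A₂ k else xor (A₂ k) (G.sign (C₂.edge k))
    | Sum.inr (Sum.inr k) => if i = P.half k then aSeq sP (k : ℕ) else !(aSeq sP ((k:ℕ)+1))
    with hD
  set d : E → Bool → Bool := fun e i => D (eh.symm e) i with hd
  have hsign : ∀ k : Fin P.m, sP (k:ℕ) = G.sign (P.edge k) := by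
    intro k
    rw [hsP]
    simp only []
    rw [dif_pos k.isLt]
  have haseq : ∀ k : Fin P.m, aSeq sP ((k:ℕ)+1)
      = xor (aSeq sP (k:ℕ)) (!(G.sign (P.edge k))) := by
    intro k
    rw [← hsign k]
    rfl
  have hcompat : ∀ e, G.sign e = xor (d e false) (d e true) := by
    intro e
    have happ : Sum.elim C₁.edge (Sum.elim C₂.edge P.edge) (eh.symm e) = e :=
      eh.apply_symm_apply e
    rcases hx : eh.symm e with k | k | k <;> rw [hx] at happ <;>
      simp only [Sum.elim_inl, Sum.elim_inr] at happ
    · rw [← happ]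
      simp only [hd]
      rw [hsym1 k]
      show G.sign (C₁.edge k) = xor
        (if false = C₁.half k then A₁ k else xor (A₁ k) (G.sign (C₁.edge k)))
        (if true = C₁.half k then A₁ k else xor (A₁ k) (G.sign (C₁.edge k)))
      cases hh : C₁.half k <;> cases hA : A₁ k <;> cases hs : G.sign (C₁.edge k) <;>
        simp [hh, hA, hs]
    · rw [← happ]
      simp only [hd]
      rw [hsym2 k]
      show G.sign (C₂.edge k) = xor
        (if false = C₂.half k then A₂ k else xor (A₂ k) (G.sign (C₂.edge k)))
        (if true = C₂.half k then A₂ k else xor (A₂ k) (G.sign (C₂.edge k)))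
      cases hh : C₂.half k <;> cases hA : A₂ k <;> cases hs : G.sign (C₂.edge k) <;>
        simp [hh, hA, hs]
    · rw [← happ]
      simp only [hd]
      rw [hsym3 k]
      show G.sign (P.edge k) = xor
        (if false = P.half k then aSeq sP (k:ℕ) else !(aSeq sP ((k:ℕ)+1)))
        (if true = P.half k then aSeq sP (k:ℕ) else !(aSeq sP ((k:ℕ)+1)))
      cases hh : P.half k <;> cases hA : aSeq sP (k:ℕ) <;> cases hs : G.sign (P.edge k) <;>
        simp [hh, haseq k, hA, hs]
  let O0 : SOrientation G := ⟨d, hcompat⟩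
  let φ0 : E → ℤ := fun e =>
    Sum.elim (fun _ => (1:ℤ)) (Sum.elim (fun _ => (1:ℤ)) (fun _ => (2:ℤ))) (eh.symm e)
  have hφ1 : ∀ k, φ0 (C₁.edge k) = 1 := fun k => by
    show Sum.elim _ _ (eh.symm (C₁.edge k)) = 1
    rw [hsym1]; rfl
  have hφ2 : ∀ k, φ0 (C₂.edge k) = 1 := fun k => by
    show Sum.elim _ _ (eh.symm (C₂.edge k)) = 1
    rw [hsym2]; rfl
  have hφ3 : ∀ k, φ0 (P.edge k) = 2 := fun k => by
    show Sum.elim _ _ (eh.symm (P.edge k)) = 2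
    rw [hsym3]; rfl
  have hd1a : ∀ k, O0.dir (C₁.edge k) (C₁.half k) = cdirA C₁ p₁ true k := by
    intro k
    show D (eh.symm (C₁.edge k)) (C₁.half k) = _
    rw [hsym1]
    show (if C₁.half k = C₁.half k then A₁ k else xor (A₁ k) (G.sign (C₁.edge k))) = _
    rw [if_pos rfl, hA₁]
  have hd1b : ∀ k, O0.dir (C₁.edge k) (!(C₁.half k))
      = xor (cdirA C₁ p₁ true k) (G.sign (C₁.edge k)) := by
    intro k
    show D (eh.symm (C₁.edge k)) (!(C₁.half k)) = _
    rw [hsym1]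
    show (if (!(C₁.half k)) = C₁.half k then A₁ k else xor (A₁ k) (G.sign (C₁.edge k))) = _
    rw [if_neg (by cases C₁.half k <;> simp), hA₁]
  have hd2a : ∀ k, O0.dir (C₂.edge k) (C₂.half k) = cdirA C₂ p₂ β₂ k := by
    intro k
    show D (eh.symm (C₂.edge k)) (C₂.half k) = _
    rw [hsym2]
    show (if C₂.half k = C₂.half k then A₂ k else xor (A₂ k) (G.sign (C₂.edge k))) = _
    rw [if_pos rfl, hA₂]
  have hd2b : ∀ k, O0.dir (C₂.edge k) (!(C₂.half k))
      = xor (cdirA C₂ p₂ β₂ k) (G.sign (C₂.edge k)) := by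
    intro k
    show D (eh.symm (C₂.edge k)) (!(C₂.half k)) = _
    rw [hsym2]
    show (if (!(C₂.half k)) = C₂.half k then A₂ k else xor (A₂ k) (G.sign (C₂.edge k))) = _
    rw [if_neg (by cases C₂.half k <;> simp), hA₂]
  have hd3a : ∀ k, O0.dir (P.edge k) (P.half k) = aSeq sP (k:ℕ) := by
    intro k
    show D (eh.symm (P.edge k)) (P.half k) = _
    rw [hsym3]
    show (if P.half k = P.half k then aSeq sP (k:ℕ) else !(aSeq sP ((k:ℕ)+1))) = _
    rw [if_pos rfl]
  have hd3b : ∀ k, O0.dir (P.edge k) (!(P.half k)) = !(aSeq sP ((k:ℕ)+1)) := by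
    intro k
    show D (eh.symm (P.edge k)) (!(P.half k)) = _
    rw [hsym3]
    show (if (!(P.half k)) = P.half k then aSeq sP (k:ℕ) else !(aSeq sP ((k:ℕ)+1))) = _
    rw [if_neg (by cases P.half k <;> simp)]
  refine ⟨O0, φ0, ?_, ?_⟩
  · rw [isFlow_iff]
    intro v
    rw [sum_split C₁ C₂ P hbij
      (fun e => ∑ i : Bool, if G.ends e i = v then sg (O0.dir e i) * φ0 e else 0)]
    rw [circSum C₁ O0.dir φ0 v, circSum C₂ O0.dir φ0 v, pathSum P O0.dir φ0 v]
    rw [circT_eval_unbal C₁ O0 φ0 p₁ true hd1a hd1b hφ1 h₁ v]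
    rw [circT_eval_unbal C₂ O0 φ0 p₂ β₂ hd2a hd2b hφ2 h₂ v]
    set gv : Fin (P.m+1) → ℤ := fun t => if P.vtx t = v then sg (aSeq sP (t:ℕ)) * 2 else 0
      with hgv
    have hTP : (∑ k : Fin P.m,
        ((if P.vtx k.castSucc = v then sg (O0.dir (P.edge k) (P.half k)) * φ0 (P.edge k) else 0)
        + (if P.vtx k.succ = v then sg (O0.dir (P.edge k) (!(P.half k))) * φ0 (P.edge k) else 0)))
        = gv 0 - gv (Fin.last P.m) := by
      have hterm : ∀ k : Fin P.m,
          ((if P.vtx k.castSucc = v then sg (O0.dir (P.edge k) (P.half k)) * φ0 (P.edge k) else 0)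
          + (if P.vtx k.succ = v then sg (O0.dir (P.edge k) (!(P.half k))) * φ0 (P.edge k) else 0))
          = gv k.castSucc - gv k.succ := by
        intro k
        rw [hd3a, hd3b, hφ3, sg_not]
        rw [hgv]
        simp only []
        by_cases hv1 : P.vtx k.castSucc = v <;> by_cases hv2 : P.vtx k.succ = v <;>
          simp [hv1, hv2, Fin.coe_castSucc, Fin.val_succ] <;> ring
      rw [Finset.sum_congr rfl (fun k _ => hterm k), Finset.sum_sub_distrib]
      have h1 : ∑ t : Fin (P.m+1), gv t = (∑ k : Fin P.m, gv k.castSucc) + gv (Fin.last P.m) :=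
        Fin.sum_univ_castSucc gv
      have h2 : ∑ t : Fin (P.m+1), gv t = gv 0 + ∑ k : Fin P.m, gv k.succ :=
        Fin.sum_univ_succ gv
      omega
    rw [hTP, hp₁, hp₂]
    have hg0 : gv 0 = if P.vtx 0 = v then -2 else 0 := by
      rw [hgv]
      simp only []
      split <;> simp [sg, aSeq]
    have hgl : gv (Fin.last P.m) = if P.vtx (Fin.last P.m) = v then sg β₂ * 2 else 0 := by
      rw [hgv, hβ₂]
      simp only [Fin.val_last]
    rw [hg0, hgl]
    by_cases hv1 : P.vtx 0 = v <;> by_cases hv2 : P.vtx (Fin.last P.m) = v <;>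
      simp [hv1, hv2, sg] <;> ring
  · intro e
    show Sum.elim _ _ (eh.symm e) ≠ 0
    rcases eh.symm e with k | k | k <;> simp

end SCAux
namespace SCAux

open Finset

variable {V E : Type} {G : SignedGraph V E}

lemma sum_vtx_eq' [Fintype E] [DecidableEq V] (C : Circuit G) (f : Fin (C.n+1) → ℤ)
    (j : Fin (C.n+1)) (v : V) (hv : C.vtx j = v) :
    (∑ k : Fin (C.n+1), if C.vtx k = v then f k else 0) = f j := by
  subst hv; exact sum_vtx_eq C f j

lemma bicircuit_part2 [Fintype E] [DecidableEq V] (C₁ C₂ : Circuit G) (P : GPath G)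
    (h₁ : ¬ C₁.Balanced) (h₂ : ¬ C₂.Balanced)
    (hstart : P.vtx 0 ∈ Set.range C₁.vtx)
    (hend : P.vtx (Fin.last P.m) ∈ Set.range C₂.vtx)
    (hmeet : ∀ x, x ∈ Set.range C₁.vtx → x ∈ Set.range C₂.vtx → P.m = 0 ∧ x = P.vtx 0)
    (hpathint : ∀ k : Fin (P.m + 1), k ≠ 0 → k ≠ Fin.last P.m →
        P.vtx k ∉ Set.range C₁.vtx ∧ P.vtx k ∉ Set.range C₂.vtx)
    (hbij : Function.Bijective (Sum.elim C₁.edge (Sum.elim C₂.edge P.edge)))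
    (S : Set E) (hne : S.Nonempty) (hnu : S ≠ Set.univ) :
    ¬ ∃ (O : SOrientation G) (φ : E → ℤ), IsFlow O φ ∧ ∀ e, (φ e ≠ 0 ↔ e ∈ S) := by
  classical
  rintro ⟨O, φ, hf, hS⟩
  obtain ⟨j₁, hj₁⟩ := hstart
  obtain ⟨j₂, hj₂⟩ := hend
  have hT : ∀ v : V,
      (∑ k, if C₁.vtx k = v then sg (O.dir (C₁.edge k) (C₁.half k)) * φ (C₁.edge k)
        + sg (O.dir (C₁.edge (k-1)) (!(C₁.half (k-1)))) * φ (C₁.edge (k-1)) else 0)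
      + (∑ k, if C₂.vtx k = v then sg (O.dir (C₂.edge k) (C₂.half k)) * φ (C₂.edge k)
        + sg (O.dir (C₂.edge (k-1)) (!(C₂.half (k-1)))) * φ (C₂.edge (k-1)) else 0)
      + (∑ k : Fin P.m,
        ((if P.vtx k.castSucc = v then sg (O.dir (P.edge k) (P.half k)) * φ (P.edge k) else 0)
        + (if P.vtx k.succ = v then sg (O.dir (P.edge k) (!(P.half k))) * φ (P.edge k) else 0)))
      = 0 := by
    intro v
    have h := (isFlow_iff O φ).mp hf v
    rw [sum_split C₁ C₂ P hbij
        (fun e => ∑ i : Bool, if G.ends e i = v then sg (O.dir e i) * φ e else 0),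
      circSum C₁ O.dir φ v, circSum C₂ O.dir φ v, pathSum P O.dir φ v] at h
    exact h
  have hlast0 : P.m = 0 → (Fin.last P.m) = (0 : Fin (P.m+1)) := by
    intro hm; ext; simp [hm]
  have hv1C2 : ∀ j, j ≠ j₁ → C₁.vtx j ∉ Set.range C₂.vtx := by
    intro j hne' hmem
    obtain ⟨hm0, hx0⟩ := hmeet _ ⟨j, rfl⟩ hmem
    exact hne' (C₁.vtx_inj (hx0.trans hj₁.symm))
  have hv1P : ∀ j, j ≠ j₁ → C₁.vtx j ∉ Set.range P.vtx := by
    rintro j hne' ⟨t, ht⟩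
    by_cases ht0 : t = 0
    · exact hne' (C₁.vtx_inj ((ht0 ▸ ht).symm.trans hj₁.symm))
    by_cases htl : t = Fin.last P.m
    · obtain ⟨hm0, hx0⟩ := hmeet _ ⟨j, rfl⟩ ⟨j₂, by rw [hj₂, ← htl, ht]⟩
      exact hne' (C₁.vtx_inj (hx0.trans hj₁.symm))
    · exact (hpathint t ht0 htl).1 ⟨j, ht.symm⟩
  have hv2C1 : ∀ j, j ≠ j₂ → C₂.vtx j ∉ Set.range C₁.vtx := by
    intro j hne' hmem
    obtain ⟨hm0, hx0⟩ := hmeet _ hmem ⟨j, rfl⟩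
    have hx1 : C₂.vtx j = P.vtx (Fin.last P.m) := by rw [hx0, hlast0 hm0]
    exact hne' (C₂.vtx_inj (hx1.trans hj₂.symm))
  have hv2P : ∀ j, j ≠ j₂ → C₂.vtx j ∉ Set.range P.vtx := by
    rintro j hne' ⟨t, ht⟩
    by_cases htl : t = Fin.last P.m
    · exact hne' (C₂.vtx_inj ((htl ▸ ht).symm.trans hj₂.symm))
    by_cases ht0 : t = 0
    · obtain ⟨hm0, _⟩ := hmeet (P.vtx 0) ⟨j₁, hj₁⟩ ⟨j, (ht0 ▸ ht).symm⟩
      exact htl (ht0.trans (hlast0 hm0).symm)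
    · exact (hpathint t ht0 htl).2 ⟨j, ht.symm⟩
  have hrel₁ : ∀ j, j ≠ j₁ → crel C₁ O φ j := by
    intro j hne'
    have h := hT (C₁.vtx j)
    rw [sum_vtx_eq C₁ _ j, sum_vtx_zero C₂ _ (hv1C2 j hne'), Finset.sum_add_distrib,
      pathSum_zero P _ (hv1P j hne') Fin.castSucc,
      pathSum_zero P _ (hv1P j hne') Fin.succ] at h
    unfold crel
    linarith [h]
  have hrel₂ : ∀ j, j ≠ j₂ → crel C₂ O φ j := by
    intro j hne'
    have h := hT (C₂.vtx j)
    rw [sum_vtx_eq C₂ _ j, sum_vtx_zero C₁ _ (hv2C1 j hne'), Finset.sum_add_distrib,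
      pathSum_zero P _ (hv2P j hne') Fin.castSucc,
      pathSum_zero P _ (hv2P j hne') Fin.succ] at h
    unfold crel
    linarith [h]
  have hpchain : ∀ (u : Fin P.m), φ (P.edge u) = 0 → ∀ u', φ (P.edge u') = 0 := by
    have key : ∀ d : ℕ, ∀ h : d < P.m,
        (φ (P.edge ⟨d, h⟩) = 0 ↔ φ (P.edge ⟨0, Nat.zero_lt_of_lt h⟩) = 0) := by
      intro d
      induction d with
      | zero => intro h; exact Iff.rfl
      | succ d ih =>
        intro h
        have ht0 : (⟨d+1, by omega⟩ : Fin (P.m+1)) ≠ 0 := by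
          apply Fin.ne_of_val_ne
          simp
        have htl : (⟨d+1, by omega⟩ : Fin (P.m+1)) ≠ Fin.last P.m := by
          apply Fin.ne_of_val_ne
          simp only [Fin.val_last]
          omega
        have h' := hT (P.vtx (⟨d+1, by omega⟩ : Fin (P.m+1)))
        rw [sum_vtx_zero C₁ _ (hpathint _ ht0 htl).1,
          sum_vtx_zero C₂ _ (hpathint _ ht0 htl).2, Finset.sum_add_distrib,
          pathSum_fst P (fun k => sg (O.dir (P.edge k) (P.half k)) * φ (P.edge k)) _,
          pathSum_snd P (fun k => sg (O.dir (P.edge k) (!(P.half k))) * φ (P.edge k)) _] at h'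
        rw [dif_pos (show ((⟨d+1, by omega⟩ : Fin (P.m+1)) : ℕ) < P.m from h),
          dif_pos (show 0 < ((⟨d+1, by omega⟩ : Fin (P.m+1)) : ℕ) from Nat.succ_pos d)] at h'
        simp only [zero_add] at h'
        exact (zero_iff_of_pair h').trans (ih (by omega))
    rintro u hu u'
    have h0 := (key u.val u.isLt).mp hu
    exact (key u'.val u'.isLt).mpr h0
  have hemptyP : P.m = 0 → ∀ (f : Fin P.m → ℤ), (∑ k, f k) = 0 := by
    intro hm f
    apply Finset.sum_eq_zero
    intro k _
    exact absurd k.isLt (by omega)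
  have hj1eq : ∀ hm : 0 < P.m,
      (sg (O.dir (C₁.edge j₁) (C₁.half j₁)) * φ (C₁.edge j₁)
       + sg (O.dir (C₁.edge (j₁-1)) (!(C₁.half (j₁-1)))) * φ (C₁.edge (j₁-1)))
      + sg (O.dir (P.edge ⟨0, hm⟩) (P.half ⟨0, hm⟩)) * φ (P.edge ⟨0, hm⟩) = 0 := by
    intro hm
    have hnC2 : P.vtx (0 : Fin (P.m+1)) ∉ Set.range C₂.vtx := by
      intro hmem
      obtain ⟨hm0, _⟩ := hmeet _ ⟨j₁, hj₁⟩ hmem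
      omega
    have h := hT (P.vtx (0 : Fin (P.m+1)))
    rw [sum_vtx_eq' C₁ _ j₁ _ hj₁, sum_vtx_zero C₂ _ hnC2, Finset.sum_add_distrib,
      pathSum_fst P (fun k => sg (O.dir (P.edge k) (P.half k)) * φ (P.edge k)) _,
      pathSum_snd P (fun k => sg (O.dir (P.edge k) (!(P.half k))) * φ (P.edge k)) _] at h
    rw [dif_pos (show ((0 : Fin (P.m+1)) : ℕ) < P.m by simpa using hm),
      dif_neg (show ¬ 0 < ((0 : Fin (P.m+1)) : ℕ) by simp)] at h
    simp only [Fin.val_zero] at h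
    linarith [h]
  have hj2eq : ∀ hm : 0 < P.m,
      (sg (O.dir (C₂.edge j₂) (C₂.half j₂)) * φ (C₂.edge j₂)
       + sg (O.dir (C₂.edge (j₂-1)) (!(C₂.half (j₂-1)))) * φ (C₂.edge (j₂-1)))
      + sg (O.dir (P.edge ⟨P.m-1, by omega⟩) (!(P.half ⟨P.m-1, by omega⟩)))
          * φ (P.edge ⟨P.m-1, by omega⟩) = 0 := by
    intro hm
    have hnC1 : P.vtx (Fin.last P.m) ∉ Set.range C₁.vtx := by
      intro hmem
      obtain ⟨hm0, _⟩ := hmeet _ hmem ⟨j₂, hj₂⟩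
      omega
    have h := hT (P.vtx (Fin.last P.m))
    rw [sum_vtx_zero C₁ _ hnC1, sum_vtx_eq' C₂ _ j₂ _ hj₂, Finset.sum_add_distrib,
      pathSum_fst P (fun k => sg (O.dir (P.edge k) (P.half k)) * φ (P.edge k)) _,
      pathSum_snd P (fun k => sg (O.dir (P.edge k) (!(P.half k))) * φ (P.edge k)) _] at h
    rw [dif_neg (show ¬ ((Fin.last P.m : Fin (P.m+1)) : ℕ) < P.m by simp),
      dif_pos (show 0 < ((Fin.last P.m : Fin (P.m+1)) : ℕ) by simpa using hm)] at h
    simp only [Fin.val_last] at h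
    linarith [h]
  have hj1eq0 : P.m = 0 →
      (sg (O.dir (C₁.edge j₁) (C₁.half j₁)) * φ (C₁.edge j₁)
       + sg (O.dir (C₁.edge (j₁-1)) (!(C₁.half (j₁-1)))) * φ (C₁.edge (j₁-1)))
      + (sg (O.dir (C₂.edge j₂) (C₂.half j₂)) * φ (C₂.edge j₂)
       + sg (O.dir (C₂.edge (j₂-1)) (!(C₂.half (j₂-1)))) * φ (C₂.edge (j₂-1))) = 0 := by
    intro hm
    have hj₂' : C₂.vtx j₂ = P.vtx (0 : Fin (P.m+1)) := by rw [hj₂, hlast0 hm]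
    have h := hT (P.vtx (0 : Fin (P.m+1)))
    rw [sum_vtx_eq' C₁ _ j₁ _ hj₁, sum_vtx_eq' C₂ _ j₂ _ hj₂',
      hemptyP hm (fun k =>
        (if P.vtx k.castSucc = P.vtx (0 : Fin (P.m+1))
          then sg (O.dir (P.edge k) (P.half k)) * φ (P.edge k) else 0)
        + (if P.vtx k.succ = P.vtx (0 : Fin (P.m+1))
          then sg (O.dir (P.edge k) (!(P.half k))) * φ (P.edge k) else 0))] at h
    linarith [h]
  have hC1zero : (∃ k, φ (C₁.edge k) = 0) → ∀ j, φ (C₁.edge j) = 0 := by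
    rintro ⟨k, hk⟩
    exact chain_zero C₁ O φ j₁ (fun j hj => hrel₁ j hj) k hk
  have hC2zero : (∃ k, φ (C₂.edge k) = 0) → ∀ j, φ (C₂.edge j) = 0 := by
    rintro ⟨k, hk⟩
    exact chain_zero C₂ O φ j₂ (fun j hj => hrel₂ j hj) k hk
  have hC1all : crel C₁ O φ j₁ → ∀ j, φ (C₁.edge j) = 0 := by
    intro hcr
    apply unbalanced_zero C₁ O φ h₁
    intro j
    by_cases hj : j = j₁
    · rwa [hj]
    · exact hrel₁ j hj
  have hC2all : crel C₂ O φ j₂ → ∀ j, φ (C₂.edge j) = 0 := by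
    intro hcr
    apply unbalanced_zero C₂ O φ h₂
    intro j
    by_cases hj : j = j₂
    · rwa [hj]
    · exact hrel₂ j hj
  obtain ⟨e0, he0⟩ := (Set.ne_univ_iff_exists_notMem S).mp hnu
  have hz : φ e0 = 0 := by
    by_contra h
    exact he0 ((hS e0).mp h)
  have hfin : (∀ j, φ (C₁.edge j) = 0) → (∀ j, φ (C₂.edge j) = 0) →
      (∀ u, φ (P.edge u) = 0) → False := by
    intro hA hB hC
    obtain ⟨e1, he1⟩ := hne
    obtain ⟨x, hx⟩ := hbij.2 e1
    have hzz : φ e1 = 0 := by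
      rcases x with k | k | k <;> simp only [Sum.elim_inl, Sum.elim_inr] at hx <;> rw [← hx]
      · exact hA k
      · exact hB k
      · exact hC k
    exact (hS e1).mpr he1 hzz
  obtain ⟨x0, hx0⟩ := hbij.2 e0
  rcases x0 with k | k | k <;> simp only [Sum.elim_inl, Sum.elim_inr] at hx0
  · -- e0 in C₁
    have hA : ∀ j, φ (C₁.edge j) = 0 := hC1zero ⟨k, by rw [hx0]; exact hz⟩
    by_cases hm : 0 < P.m
    · have hp0 : φ (P.edge ⟨0, hm⟩) = 0 := by
        have h := hj1eq hm
        rw [hA j₁, hA (j₁ - 1), mul_zero, mul_zero, add_zero, zero_add] at h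
        exact (mul_eq_zero.mp h).resolve_left (sg_ne _)
      have hC : ∀ u, φ (P.edge u) = 0 := hpchain ⟨0, hm⟩ hp0
      have hB : ∀ j, φ (C₂.edge j) = 0 := by
        apply hC2all
        have h := hj2eq hm
        rw [hC ⟨P.m-1, by omega⟩, mul_zero, add_zero] at h
        exact h
      exact hfin hA hB hC
    · have hm0 : P.m = 0 := by omega
      have hB : ∀ j, φ (C₂.edge j) = 0 := by
        apply hC2all
        have h := hj1eq0 hm0
        rw [hA j₁, hA (j₁ - 1), mul_zero, mul_zero, add_zero, zero_add] at h
        exact h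
      exact hfin hA hB (fun u => absurd u.isLt (by omega))
  · -- e0 in C₂
    have hB : ∀ j, φ (C₂.edge j) = 0 := hC2zero ⟨k, by rw [hx0]; exact hz⟩
    by_cases hm : 0 < P.m
    · have hpl : φ (P.edge ⟨P.m-1, by omega⟩) = 0 := by
        have h := hj2eq hm
        rw [hB j₂, hB (j₂ - 1), mul_zero, mul_zero, add_zero, zero_add] at h
        exact (mul_eq_zero.mp h).resolve_left (sg_ne _)
      have hC : ∀ u, φ (P.edge u) = 0 := hpchain ⟨P.m-1, by omega⟩ hpl
      have hA : ∀ j, φ (C₁.edge j) = 0 := by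
        apply hC1all
        have h := hj1eq hm
        rw [hC ⟨0, hm⟩, mul_zero, add_zero] at h
        exact h
      exact hfin hA hB hC
    · have hm0 : P.m = 0 := by omega
      have hA : ∀ j, φ (C₁.edge j) = 0 := by
        apply hC1all
        have h := hj1eq0 hm0
        rw [hB j₂, hB (j₂ - 1), mul_zero, mul_zero, add_zero, add_zero] at h
        exact h
      exact hfin hA hB (fun u => absurd u.isLt (by omega))
  · -- e0 on the path
    have hm : 0 < P.m := k.pos
    have hC : ∀ u, φ (P.edge u) = 0 := hpchain k (by rw [hx0]; exact hz)
    have hA : ∀ j, φ (C₁.edge j) = 0 := by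
      apply hC1all
      have h := hj1eq hm
      rw [hC ⟨0, hm⟩, mul_zero, add_zero] at h
      exact h
    have hB : ∀ j, φ (C₂.edge j) = 0 := by
      apply hC2all
      have h := hj2eq hm
      rw [hC ⟨P.m-1, by omega⟩, mul_zero, add_zero] at h
      exact h
    exact hfin hA hB hC

end SCAux
/-- Every signed circuit (regarded as a signed graph in its own right, i.e.
its edges are all the edges of `G`) admits a nowhere-zero integer flow, and it
is inclusion-minimal with this property: no proper nonempty subgraph (given by
a proper nonempty subset `S` of edges) carries an integer flow that is nonzero
exactly on `S`. -/
theorem signedCircuit_minimal_flow {V E : Type} [Fintype E] [DecidableEq V]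
    (G : SignedGraph V E) (SC : SignedCircuit G) (hcov : SC.edges = Set.univ) :
    HasNZFlow G ∧
    ∀ S : Set E, S.Nonempty → S ≠ Set.univ →
      ¬ ∃ (O : SOrientation G) (φ : E → ℤ),
          IsFlow O φ ∧ ∀ e, (φ e ≠ 0 ↔ e ∈ S) := by
  classical
  rcases SC with ⟨C, hb⟩ |
    ⟨C₁, C₂, P, h₁, h₂, hstart, hend, hmeet, hpathint, hedisj, hpe₁, hpe₂⟩
  · simp only [SignedCircuit.edges] at hcov
    have hsurj : Function.Surjective C.edge := Set.range_eq_univ.mp hcov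
    exact ⟨SCAux.balanced_flow C hb hsurj,
      fun S hn1 hn2 => SCAux.balanced_part2 C hsurj S hn1 hn2⟩
  · simp only [SignedCircuit.edges] at hcov
    have hbij := SCAux.elim_bij C₁ C₂ P hcov hedisj hpe₁ hpe₂
    obtain ⟨p₁, hp₁⟩ := hstart
    obtain ⟨p₂, hp₂⟩ := hend
    exact ⟨SCAux.bicircuit_flow C₁ C₂ P h₁ h₂ p₁ hp₁ p₂ hp₂ hbij,
      fun S hn1 hn2 => SCAux.bicircuit_part2 C₁ C₂ P h₁ h₂ ⟨p₁, hp₁⟩ ⟨p₂, hp₂⟩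
        hmeet hpathint hbij S hn1 hn2⟩
end

section
/- Every signed circuit C of a bidirected signed graph can be made consistently directed by reversing the orientations of some subset of its edges, and consistency of the resulting orientation is preserved under switching the signature at any vertex. -/
variable {V E : Type}

/-! ### Auxiliary lemmas -/

private lemma bool_ne_not (x : Bool) : x ≠ !x := by cases x <;> decide

private def bfun : Bool → ZMod 2 := fun b => if b then 1 else 0

private lemma bfun_xor (x y : Bool) : bfun (xor x y) = bfun x + bfun y := by
  cases x <;> cases y <;> decide

private lemma bfun_inj : Function.Injective bfun := by
  intro x y h; cases x <;> cases y <;> simp_all [bfun]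

private lemma bool_taut2 : ∀ x c y a' : Bool,
    (xor x c ≠ xor y a') ↔ y = xor x (xor c (xor a' true)) := by decide

private lemma bool_taut1 : ∀ x c a : Bool,
    (xor x c) ≠ (xor (xor x (xor c (xor a true))) a) := by decide
private lemma bool_taut3 : ∀ x c a : Bool,
    ((xor x c) ≠ (xor false a)) ↔ (xor x (xor c (xor a true))) = false := by decide
private lemma bflip : ∀ x y c a : Bool, ((xor x c) ≠ (xor y a)) → ((xor (!x) c) ≠ (xor (!y) a)) := by decide
private lemma bflip_iff : ∀ x y c a : Bool, ((xor (!x) c) ≠ (xor (!y) a)) ↔ ((xor x c) ≠ (xor y a)) := by decide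
private lemma bflip_eq : ∀ x c b : Bool, (xor x c) ≠ b → (xor (!x) c) = b := by decide

open scoped Fin.NatCast Fin.CommRing

lemma circuitOrient (G : SignedGraph V E) (O : SOrientation G)
    (C : Circuit G) (i₀ : Fin (C.n+1)) :
    ∀ b : Bool, ∃ t : Fin (C.n+1) → Bool,
      (∀ i, i ≠ i₀ →
        xor (t i) (O.dir (C.edge i) (!(C.half i))) ≠
          xor (t (i+1)) (O.dir (C.edge (i+1)) (C.half (i+1)))) ∧
      ((xor (t i₀) (O.dir (C.edge i₀) (!(C.half i₀))) ≠
          xor (t (i₀+1)) (O.dir (C.edge (i₀+1)) (C.half (i₀+1)))) ↔ C.Balanced) ∧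
      xor (t i₀) (O.dir (C.edge i₀) (!(C.half i₀))) = b := by
  -- It suffices to find `t` satisfying the first two conditions: we can then
  -- flip all of `t` to adjust the last value.
  suffices h : ∃ t : Fin (C.n+1) → Bool,
      (∀ i, i ≠ i₀ →
        xor (t i) (O.dir (C.edge i) (!(C.half i))) ≠
          xor (t (i+1)) (O.dir (C.edge (i+1)) (C.half (i+1)))) ∧
      ((xor (t i₀) (O.dir (C.edge i₀) (!(C.half i₀))) ≠
          xor (t (i₀+1)) (O.dir (C.edge (i₀+1)) (C.half (i₀+1)))) ↔ C.Balanced) by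
    obtain ⟨t, h1, h2⟩ := h
    intro b
    by_cases hb : xor (t i₀) (O.dir (C.edge i₀) (!(C.half i₀))) = b
    · exact ⟨t, h1, h2, hb⟩
    · refine ⟨fun i => !(t i), ?_, ?_, ?_⟩
      · intro i hi
        exact bflip _ _ _ _ (h1 i hi)
      · exact Iff.trans (bflip_iff _ _ _ _) h2
      · exact bflip_eq _ _ _ hb
  set g : Fin (C.n+1) → Bool := fun i =>
    xor (O.dir (C.edge i) (!(C.half i)))
      (xor (O.dir (C.edge (i+1)) (C.half (i+1))) true) with hg
  -- the key parity fact
  have hsum : ∑ j : Fin (C.n+1), bfun (g j)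
      = (((Finset.univ.filter (fun i => G.sign (C.edge i) = true)).card + (C.n+1) : ℕ) : ZMod 2) := by
    have h1 : ∀ j : Fin (C.n+1), bfun (g j)
        = bfun (O.dir (C.edge j) (!(C.half j)))
          + bfun (O.dir (C.edge (j+1)) (C.half (j+1))) + 1 := by
      intro j
      simp only [hg, bfun_xor]
      have : bfun true = 1 := rfl
      rw [this]; ring
    rw [Finset.sum_congr rfl (fun j _ => h1 j)]
    rw [Finset.sum_add_distrib, Finset.sum_add_distrib]
    have h2 : ∑ j : Fin (C.n+1), bfun (O.dir (C.edge (j+1)) (C.half (j+1)))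
        = ∑ j : Fin (C.n+1), bfun (O.dir (C.edge j) (C.half j)) :=
      Equiv.sum_comp (Equiv.addRight (1 : Fin (C.n+1)))
        (fun j => bfun (O.dir (C.edge j) (C.half j)))
    rw [h2]
    have h3 : ∑ j : Fin (C.n+1), bfun (O.dir (C.edge j) (!(C.half j)))
          + ∑ j : Fin (C.n+1), bfun (O.dir (C.edge j) (C.half j))
        = ∑ j : Fin (C.n+1), bfun (G.sign (C.edge j)) := by
      rw [← Finset.sum_add_distrib]
      refine Finset.sum_congr rfl fun j _ => ?_
      rw [← bfun_xor]
      have hc := O.compat (C.edge j)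
      congr 1
      cases hh : C.half j <;> simp [hh, hc, Bool.xor_comm]
    rw [h3]
    have h4 : ∑ j : Fin (C.n+1), bfun (G.sign (C.edge j))
        = ((Finset.univ.filter (fun i => G.sign (C.edge i) = true)).card : ZMod 2) := by
      rw [← Finset.sum_boole]
      refine Finset.sum_congr rfl fun j _ => ?_
      cases hh : G.sign (C.edge j) <;> simp [bfun, hh]
    have h5 : ∑ _j : Fin (C.n+1), (1 : ZMod 2) = ((C.n+1 : ℕ) : ZMod 2) := by simp
    rw [h4, h5]
    push_cast
    ring
  have h6 : (Finset.univ.filter (fun i => G.sign (C.edge i) = true)).card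
      + (Finset.univ.filter (fun i => G.sign (C.edge i) = false)).card = C.n+1 := by
    rw [← Finset.card_union_of_disjoint]
    · have huniv : (Finset.univ.filter (fun i => G.sign (C.edge i) = true))
          ∪ (Finset.univ.filter (fun i => G.sign (C.edge i) = false))
          = (Finset.univ : Finset (Fin (C.n+1))) := by
        ext j
        simp only [Finset.mem_union, Finset.mem_filter, Finset.mem_univ, true_and]
        cases G.sign (C.edge j) <;> simp
      rw [huniv, Finset.card_univ, Fintype.card_fin]
    · rw [Finset.disjoint_filter]
      intro j _ h hf; simp [h] at hf
  have hiff : (∑ j : Fin (C.n+1), bfun (g j)) = 0 ↔ C.Balanced := by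
    rw [hsum, ZMod.natCast_eq_zero_iff]
    simp only [Circuit.Balanced, Nat.even_iff]
    omega
  -- the construction
  set u : ℕ → Bool := fun k => Nat.rec false (fun k' acc => xor acc (g (i₀+1+(k' : Fin (C.n+1))))) k
    with hu
  have hu0 : u 0 = false := rfl
  have huS : ∀ k, u (k+1) = xor (u k) (g (i₀+1+(k : Fin (C.n+1)))) := fun k => rfl
  have husum : ∀ m, bfun (u m) = ∑ k ∈ Finset.range m, bfun (g (i₀+1+(k : Fin (C.n+1)))) := by
    intro m
    induction m with
    | zero => simp [hu0, bfun]
    | succ m ih => rw [huS, bfun_xor, ih, Finset.sum_range_succ]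
  refine ⟨fun j => u ((j - (i₀+1)).val), ?_, ?_⟩
  · -- consistency away from i₀
    intro i hi
    simp only []
    have hlt : (i - (i₀+1)).val < C.n := by
      by_contra h
      have hle : (i - (i₀+1)).val ≤ C.n := Nat.lt_succ_iff.mp (i - (i₀+1)).isLt
      have heq : i - (i₀+1) = Fin.last C.n := by
        apply Fin.ext
        rw [Fin.val_last]
        omega
      apply hi
      have h7 : i = Fin.last C.n + (i₀ + 1) := by rw [← heq]; ring
      rw [h7]
      have h8 : Fin.last C.n + (i₀ + 1) = (Fin.last C.n + 1) + i₀ := by ring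
      rw [h8, Fin.last_add_one, zero_add]
    have hval : ((i - (i₀+1)) + 1).val = (i - (i₀+1)).val + 1 := by
      apply Fin.val_add_one_of_lt
      exact hlt
    have hstep : (i + 1) - (i₀+1) = (i - (i₀+1)) + 1 := by ring
    have hrecov : i₀ + 1 + (((i - (i₀+1)).val : ℕ) : Fin (C.n+1)) = i := by
      rw [Fin.cast_val_eq_self]; ring
    rw [hstep, hval, huS, hrecov]
    exact bool_taut1 _ _ _
  · -- at i₀: consistent iff balanced
    simp only []
    have hlast : i₀ - (i₀+1) = Fin.last C.n := by
      have h1 : (i₀ - (i₀+1)) + 1 = 0 := by ring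
      have h2 : Fin.last C.n + 1 = 0 := Fin.last_add_one C.n
      exact add_right_cancel (h1.trans h2.symm)
    have hv1 : (i₀ - (i₀+1)).val = C.n := by rw [hlast]; rfl
    have hv2 : ((i₀+1) - (i₀+1)).val = 0 := by simp
    have hgn : g (i₀ + 1 + ((C.n : ℕ) : Fin (C.n+1))) = g i₀ := by
      congr 1
      rw [Fin.natCast_eq_last]
      have h9 : i₀ + 1 + Fin.last C.n = i₀ + (Fin.last C.n + 1) := by ring
      rw [h9, Fin.last_add_one, add_zero]
    rw [hv1, hv2, hu0]
    have key : (xor (u C.n) (O.dir (C.edge i₀) (!(C.half i₀))) ≠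
        xor false (O.dir (C.edge (i₀+1)) (C.half (i₀+1)))) ↔ u (C.n + 1) = false := by
      rw [huS, hgn]
      exact bool_taut3 _ _ _
    have hNs : bfun (u (C.n+1)) = ∑ j : Fin (C.n+1), bfun (g j) := by
      rw [husum (C.n+1),
        ← Fin.sum_univ_eq_sum_range (fun k => bfun (g (i₀+1+(k : Fin (C.n+1))))) (C.n+1)]
      rw [Finset.sum_congr rfl (fun j _ => by rw [Fin.cast_val_eq_self])]
      exact Equiv.sum_comp (Equiv.addLeft (i₀+1)) (fun j => bfun (g j))
    rw [key, ← hiff]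
    constructor
    · intro h
      rw [← hNs, h]
      rfl
    · intro h
      apply bfun_inj
      rw [hNs, h]
      rfl

private lemma bool_taut1' : ∀ x c a : Bool,
    (xor x c) ≠ (xor (xor x (xor c (xor a true))) a) := by decide

lemma pathOrient (G : SignedGraph V E) (O : SOrientation G) (P : GPath G) (b : Bool) :
    ∃ t : Fin P.m → Bool,
      (∀ a c : Fin P.m, (a : ℕ) + 1 = (c : ℕ) →
        xor (t a) (O.dir (P.edge a) (!(P.half a))) ≠
          xor (t c) (O.dir (P.edge c) (P.half c))) ∧
      (∀ k : Fin P.m, (k : ℕ) = 0 →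
        xor (t k) (O.dir (P.edge k) (P.half k)) = b) := by
  obtain ⟨m, vtx, edge, half, vi, ei, es, et⟩ := P
  simp only at *
  cases m with
  | zero => exact ⟨Fin.elim0, fun a => a.elim0, fun k => k.elim0⟩
  | succ m' =>
    set gp : ℕ → Bool := fun k =>
      xor (O.dir (edge (k : Fin (m'+1))) (!(half (k : Fin (m'+1)))))
        (xor (O.dir (edge ((k+1 : ℕ) : Fin (m'+1))) (half ((k+1 : ℕ) : Fin (m'+1)))) true)
      with hgp
    set u : ℕ → Bool := fun k =>
      Nat.rec (xor b (O.dir (edge 0) (half 0))) (fun k' acc => xor acc (gp k')) k with hu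
    have hu0 : u 0 = xor b (O.dir (edge 0) (half 0)) := rfl
    have huS : ∀ k, u (k+1) = xor (u k) (gp k) := fun k => rfl
    refine ⟨fun a => u a.val, ?_, ?_⟩
    · intro a c hac
      simp only []
      have hc : c = ((a.val + 1 : ℕ) : Fin (m'+1)) := by
        rw [hac, Fin.cast_val_eq_self]
      have e1 : edge ((a.val : ℕ) : Fin (m'+1)) = edge a := by rw [Fin.cast_val_eq_self]
      have e2 : half ((a.val : ℕ) : Fin (m'+1)) = half a := by rw [Fin.cast_val_eq_self]
      have e3 : edge ((a.val + 1 : ℕ) : Fin (m'+1)) = edge c := by rw [← hc]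
      have e4 : half ((a.val + 1 : ℕ) : Fin (m'+1)) = half c := by rw [← hc]
      have hgpa : gp a.val
          = xor (O.dir (edge a) (!(half a))) (xor (O.dir (edge c) (half c)) true) := by
        rw [hgp]
        simp only []
        rw [e1, e2, e3, e4]
      rw [show (c : ℕ) = a.val + 1 from hac.symm, huS, hgpa]
      exact bool_taut1' _ _ _
    · intro k hk
      simp only []
      have hk0 : k = 0 := Fin.ext (by simpa using hk)
      rw [hk0]
      show xor (u 0) (O.dir (edge 0) (half 0)) = b
      rw [hu0]
      simp [Bool.xor_assoc]

lemma switchOrient [DecidableEq V] (G : SignedGraph V E) (O : SOrientation G) (v : V) :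
    ∃ O' : SOrientation (G.switch v),
      ∀ e i, O'.dir e i = if G.ends e i = v then !(O.dir e i) else O.dir e i := by
  refine ⟨⟨fun e i => if G.ends e i = v then !(O.dir e i) else O.dir e i, ?_⟩, fun e i => rfl⟩
  intro e
  have hc := O.compat e
  show (if (G.ends e false = v ∨ G.ends e true = v) ∧ G.ends e false ≠ G.ends e true
      then !(G.sign e) else G.sign e)
      = xor (if G.ends e false = v then !(O.dir e false) else O.dir e false)
          (if G.ends e true = v then !(O.dir e true) else O.dir e true)
  by_cases h0 : G.ends e false = v <;> by_cases h1 : G.ends e true = v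
  · rw [if_neg (by simp [h0.trans h1.symm]), if_pos h0, if_pos h1, hc]
    cases O.dir e false <;> cases O.dir e true <;> rfl
  · rw [if_pos ⟨Or.inl h0, fun hh => h1 (hh ▸ h0)⟩, if_pos h0, if_neg h1, hc]
    cases O.dir e false <;> cases O.dir e true <;> rfl
  · rw [if_pos ⟨Or.inr h1, fun hh => h0 (hh.symm ▸ h1)⟩, if_neg h0, if_pos h1, hc]
    cases O.dir e false <;> cases O.dir e true <;> rfl
  · rw [if_neg (by simp [h0, h1]), if_neg h0, if_neg h1, hc]

lemma switch_ne [DecidableEq V] (G : SignedGraph V E) (O : SOrientation G) (v : V)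
    {e e' : E} {i i' : Bool} (h : G.ends e i = G.ends e' i') :
    ((if G.ends e i = v then !(O.dir e i) else O.dir e i)
        ≠ (if G.ends e' i' = v then !(O.dir e' i') else O.dir e' i'))
      ↔ (O.dir e i ≠ O.dir e' i') := by
  rw [← h]
  split_ifs with hv
  · cases O.dir e i <;> cases O.dir e' i' <;> simp
  · exact Iff.rfl

/-- Every signed circuit can be made consistently directed by reversing the
orientations of some of its edges, and consistency of an orientation of a
signed circuit is preserved under switching at any vertex. -/
theorem consistent_orientation_exists_and_switch {V E : Type} [Fintype E]
    [DecidableEq V] (G : SignedGraph V E) (O : SOrientation G)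
    (SC : SignedCircuit G) :
    (∃ s : E → Bool, (∀ e ∉ SC.edges, s e = false) ∧
        SC.ConsistentlyDirected (O.reorient s).dir) ∧
    ∀ v : V, SC.ConsistentlyDirected O.dir →
      (∃ O' : SOrientation (G.switch v),
        ∀ e i, O'.dir e i = if G.ends e i = v then !(O.dir e i) else O.dir e i) ∧
      SC.ConsistentlyDirected
        (fun e i => if G.ends e i = v then !(O.dir e i) else O.dir e i) := by
  classical
  cases SC with
  | balanced C hb =>
    constructor
    · -- existence of a consistent reorientation
      obtain ⟨t, h1, h2, _⟩ := circuitOrient G O C 0 true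
      refine ⟨fun e => if h : ∃ i, C.edge i = e then t h.choose else false, ?_, ?_⟩
      · intro e he
        exact dif_neg he
      · have hsE : ∀ i : Fin (C.n+1),
            (if h : ∃ j, C.edge j = C.edge i then t h.choose else false) = t i := by
          intro i
          rw [dif_pos (⟨i, rfl⟩ : ∃ j, C.edge j = C.edge i)]
          congr 1
          exact C.edge_inj (Exists.choose_spec (⟨i, rfl⟩ : ∃ j, C.edge j = C.edge i))
        intro i
        show xor (if h : ∃ j, C.edge j = C.edge i then t h.choose else false)
            (O.dir (C.edge i) (!(C.half i)))
          ≠ xor (if h : ∃ j, C.edge j = C.edge (i+1) then t h.choose else false)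
            (O.dir (C.edge (i+1)) (C.half (i+1)))
        rw [hsE i, hsE (i+1)]
        by_cases hi : i = 0
        · subst hi
          exact h2.mpr hb
        · exact h1 i hi
    · -- switching preserves consistency
      intro v hcons
      refine ⟨switchOrient G O v, ?_⟩
      intro i
      have hends : G.ends (C.edge i) (!(C.half i)) = G.ends (C.edge (i+1)) (C.half (i+1)) := by
        rw [C.ends_tgt, C.ends_src]
      exact (switch_ne G O v hends).mpr (hcons i)
  | bicircuit C₁ C₂ P h₁ h₂ hstart hend hmeet hpathint hedisj hpe₁ hpe₂ =>
    obtain ⟨j₁', hj₁'⟩ := hstart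
    obtain ⟨j₂', hj₂'⟩ := hend
    have hi₁ : C₁.vtx ((j₁' - 1) + 1) = P.vtx 0 := by rw [sub_add_cancel]; exact hj₁'
    have hi₂ : C₂.vtx ((j₂' - 1) + 1) = P.vtx (Fin.last P.m) := by
      rw [sub_add_cancel]; exact hj₂'
    have huniq₁ : ∀ j, C₁.vtx (j + 1) = P.vtx 0 → j = j₁' - 1 := by
      intro j hj
      exact add_right_cancel (C₁.vtx_inj (hj.trans hi₁.symm))
    have huniq₂ : ∀ j, C₂.vtx (j + 1) = P.vtx (Fin.last P.m) → j = j₂' - 1 := by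
      intro j hj
      exact add_right_cancel (C₂.vtx_inj (hj.trans hi₂.symm))
    constructor
    · -- existence of a consistent reorientation
      obtain ⟨t₁, hA1, hA2, hA3⟩ := circuitOrient G O C₁ (j₁' - 1) false
      obtain ⟨tP, hP1, hP2⟩ := pathOrient G O P true
      obtain ⟨t₂, hB1, hB2, hB3⟩ := circuitOrient G O C₂ (j₂' - 1)
        (dite (P.m = 0) (fun _ => true) (fun h =>
          !(xor (tP ⟨P.m - 1, Nat.sub_lt (Nat.pos_of_ne_zero h) one_pos⟩)
            (O.dir (P.edge ⟨P.m - 1, Nat.sub_lt (Nat.pos_of_ne_zero h) one_pos⟩)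
              (!(P.half ⟨P.m - 1, Nat.sub_lt (Nat.pos_of_ne_zero h) one_pos⟩))))))
      set s : E → Bool := fun e =>
        if h : ∃ i, C₁.edge i = e then t₁ h.choose
        else if h : ∃ i, C₂.edge i = e then t₂ h.choose
        else if h : ∃ i, P.edge i = e then tP h.choose
        else false with hs
      have hsE1 : ∀ i, s (C₁.edge i) = t₁ i := by
        intro i
        simp only [hs]
        rw [dif_pos (⟨i, rfl⟩ : ∃ j, C₁.edge j = C₁.edge i)]
        congr 1
        exact C₁.edge_inj (Exists.choose_spec (⟨i, rfl⟩ : ∃ j, C₁.edge j = C₁.edge i))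
      have hsE2 : ∀ i, s (C₂.edge i) = t₂ i := by
        intro i
        simp only [hs]
        have hn1 : ¬∃ j, C₁.edge j = C₂.edge i := fun hh => hedisj hh.choose i hh.choose_spec
        rw [dif_neg hn1, dif_pos (⟨i, rfl⟩ : ∃ j, C₂.edge j = C₂.edge i)]
        congr 1
        exact C₂.edge_inj (Exists.choose_spec (⟨i, rfl⟩ : ∃ j, C₂.edge j = C₂.edge i))
      have hsEP : ∀ k, s (P.edge k) = tP k := by
        intro k
        simp only [hs]
        have hn1 : ¬∃ j, C₁.edge j = P.edge k := fun hh => hpe₁ k hh.choose hh.choose_spec.symm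
        have hn2 : ¬∃ j, C₂.edge j = P.edge k := fun hh => hpe₂ k hh.choose hh.choose_spec.symm
        rw [dif_neg hn1, dif_neg hn2, dif_pos (⟨k, rfl⟩ : ∃ j, P.edge j = P.edge k)]
        congr 1
        exact P.edge_inj (Exists.choose_spec (⟨k, rfl⟩ : ∃ j, P.edge j = P.edge k))
      refine ⟨s, ?_, ?_, ?_, ?_, ?_, ?_, ?_, ?_, ?_⟩
      · -- zero outside the circuit
        intro e he
        simp only [SignedCircuit.edges, Set.mem_union, Set.mem_range, not_or] at he
        obtain ⟨⟨hn1, hn2⟩, hn3⟩ := he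
        simp only [hs]
        rw [dif_neg hn1, dif_neg hn2, dif_neg hn3]
      · -- C₁ consistent away from the faulty vertex
        intro i hne
        show xor (s (C₁.edge i)) (O.dir (C₁.edge i) (!(C₁.half i)))
          ≠ xor (s (C₁.edge (i+1))) (O.dir (C₁.edge (i+1)) (C₁.half (i+1)))
        rw [hsE1 i, hsE1 (i+1)]
        refine hA1 i (fun h => hne ?_)
        rw [h]; exact hi₁
      · -- C₁ inconsistent at the faulty vertex
        intro i heq
        have hii : i = j₁' - 1 := huniq₁ i heq
        subst hii
        intro hcon
        have hcon' : xor (s (C₁.edge (j₁' - 1))) (O.dir (C₁.edge (j₁' - 1)) (!(C₁.half (j₁' - 1))))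
            ≠ xor (s (C₁.edge ((j₁' - 1)+1))) (O.dir (C₁.edge ((j₁' - 1)+1)) (C₁.half ((j₁' - 1)+1))) :=
          hcon
        rw [hsE1, hsE1] at hcon'
        exact h₁ (hA2.mp hcon')
      · -- C₂ consistent away from the faulty vertex
        intro i hne
        show xor (s (C₂.edge i)) (O.dir (C₂.edge i) (!(C₂.half i)))
          ≠ xor (s (C₂.edge (i+1))) (O.dir (C₂.edge (i+1)) (C₂.half (i+1)))
        rw [hsE2 i, hsE2 (i+1)]
        refine hB1 i (fun h => hne ?_)
        rw [h]; exact hi₂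
      · -- C₂ inconsistent at the faulty vertex
        intro i heq
        have hii : i = j₂' - 1 := huniq₂ i heq
        subst hii
        intro hcon
        have hcon' : xor (s (C₂.edge (j₂' - 1))) (O.dir (C₂.edge (j₂' - 1)) (!(C₂.half (j₂' - 1))))
            ≠ xor (s (C₂.edge ((j₂' - 1)+1))) (O.dir (C₂.edge ((j₂' - 1)+1)) (C₂.half ((j₂' - 1)+1))) :=
          hcon
        rw [hsE2, hsE2] at hcon'
        exact h₂ (hB2.mp hcon')
      · -- the path is consistently directed
        intro a c hac
        show xor (s (P.edge a)) (O.dir (P.edge a) (!(P.half a)))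
          ≠ xor (s (P.edge c)) (O.dir (P.edge c) (P.half c))
        rw [hsEP a, hsEP c]
        exact hP1 a c hac
      · -- junction at the start of the path
        intro k hk j hj
        have hjj : j = j₁' - 1 := huniq₁ j hj
        subst hjj
        show xor (s (P.edge k)) (O.dir (P.edge k) (P.half k))
          ≠ xor (s (C₁.edge (j₁' - 1))) (O.dir (C₁.edge (j₁' - 1)) (!(C₁.half (j₁' - 1))))
        rw [hsEP k, hsE1 (j₁' - 1), hP2 k hk, hA3]
        simp
      · -- junction at the end of the path
        intro k hk j hj
        have hjj : j = j₂' - 1 := huniq₂ j hj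
        subst hjj
        have hm' : P.m ≠ 0 := by omega
        have hkk : k = (⟨P.m - 1, Nat.sub_lt (Nat.pos_of_ne_zero hm') one_pos⟩ : Fin P.m) :=
          Fin.ext (show (k : ℕ) = P.m - 1 by omega)
        show xor (s (P.edge k)) (O.dir (P.edge k) (!(P.half k)))
          ≠ xor (s (C₂.edge (j₂' - 1))) (O.dir (C₂.edge (j₂' - 1)) (!(C₂.half (j₂' - 1))))
        rw [hsEP k, hsE2 (j₂' - 1), hB3, dif_neg hm', hkk]
        exact bool_ne_not _
      · -- junction when the path is trivial
        intro hm0 jj₁ jj₂ hjj₁ hjj₂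
        have e1 : jj₁ = j₁' - 1 := huniq₁ jj₁ hjj₁
        have hlz : Fin.last P.m = (0 : Fin (P.m+1)) := Fin.ext (by simp [hm0])
        have e2 : jj₂ = j₂' - 1 := huniq₂ jj₂ (by rw [hlz]; exact hjj₂)
        subst e1
        subst e2
        show xor (s (C₁.edge (j₁' - 1))) (O.dir (C₁.edge (j₁' - 1)) (!(C₁.half (j₁' - 1))))
          ≠ xor (s (C₂.edge (j₂' - 1))) (O.dir (C₂.edge (j₂' - 1)) (!(C₂.half (j₂' - 1))))
        rw [hsE1, hsE2, hA3, hB3, dif_pos hm0]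
        simp
    · -- switching preserves consistency
      intro v hcons
      obtain ⟨q1, q2, q3, q4, q5, q6, q7, q8⟩ := hcons
      have hendsC₁ : ∀ i : Fin (C₁.n+1),
          G.ends (C₁.edge i) (!(C₁.half i)) = G.ends (C₁.edge (i+1)) (C₁.half (i+1)) :=
        fun i => by rw [C₁.ends_tgt, C₁.ends_src]
      have hendsC₂ : ∀ i : Fin (C₂.n+1),
          G.ends (C₂.edge i) (!(C₂.half i)) = G.ends (C₂.edge (i+1)) (C₂.half (i+1)) :=
        fun i => by rw [C₂.ends_tgt, C₂.ends_src]
      refine ⟨switchOrient G O v, ?_, ?_, ?_, ?_, ?_, ?_, ?_, ?_⟩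
      · intro i hne
        exact (switch_ne G O v (hendsC₁ i)).mpr (q1 i hne)
      · intro i heq hcon
        exact q2 i heq ((switch_ne G O v (hendsC₁ i)).mp hcon)
      · intro i hne
        exact (switch_ne G O v (hendsC₂ i)).mpr (q3 i hne)
      · intro i heq hcon
        exact q4 i heq ((switch_ne G O v (hendsC₂ i)).mp hcon)
      · intro a c hac
        have hP : G.ends (P.edge a) (!(P.half a)) = G.ends (P.edge c) (P.half c) := by
          rw [P.ends_tgt, P.ends_src]
          congr 1
          exact Fin.ext (by simpa using hac)
        exact (switch_ne G O v hP).mpr (q5 a c hac)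
      · intro k hk j hj
        have h6e : G.ends (P.edge k) (P.half k) = G.ends (C₁.edge j) (!(C₁.half j)) := by
          rw [P.ends_src, C₁.ends_tgt, hj]
          congr 1
          exact Fin.ext (by simpa using hk)
        exact (switch_ne G O v h6e).mpr (q6 k hk j hj)
      · intro k hk j hj
        have h7e : G.ends (P.edge k) (!(P.half k)) = G.ends (C₂.edge j) (!(C₂.half j)) := by
          rw [P.ends_tgt, C₂.ends_tgt, hj]
          congr 1
          exact Fin.ext (by simpa using hk)
        exact (switch_ne G O v h7e).mpr (q7 k hk j hj)
      · intro hm0 jj₁ jj₂ hjj₁ hjj₂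
        have h8e : G.ends (C₁.edge jj₁) (!(C₁.half jj₁))
            = G.ends (C₂.edge jj₂) (!(C₂.half jj₂)) := by
          rw [C₁.ends_tgt, C₂.ends_tgt, hjj₁, hjj₂]
        exact (switch_ne G O v h8e).mpr (q8 hm0 jj₁ jj₂ hjj₁ hjj₂)
end

section
/- Let G be a bidirected signed graph with a positive orientation with respect to a nonzero integer flow, let D and D' be two edge-disjoint consistently directed unbalanced circuits in the support, with faulty vertices d and d' respectively, and let T be a consistently directed trail starting at d whose first edge is consistent at d with the edges of D. If the terminal vertex t of T lies on D − d, then the support contains a consistently directed balanced circuit. -/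
variable {V E : Type}

section BalancedAux

variable {V E : Type}
open Fin.NatCast Fin.CommRing

lemma xor_halves' (G : SignedGraph V E) (d : E → Bool → Bool)
    (compat : ∀ e, G.sign e = xor (d e false) (d e true)) (e : E) (h : Bool) :
    d e (!h) = xor (d e h) (G.sign e) := by
  rw [compat]; cases h <;> cases hf : d e false <;> cases ht : d e true <;> simp [hf, ht]

lemma consistent_circuit_balanced {G : SignedGraph V E} (d : E → Bool → Bool)
    (compat : ∀ e, G.sign e = xor (d e false) (d e true))
    (C : Circuit G) (hc : ∀ i, C.ConsistentAt d i) : C.Balanced := by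
  classical
  set N := C.n + 1 with hN
  set s : ℕ → Bool := fun k => d (C.edge (k : Fin N)) (C.half (k : Fin N)) with hs
  set δ : ℕ → ZMod 2 := fun k => if G.sign (C.edge (k : Fin N)) = false then 1 else 0 with hδ
  set σ : ℕ → ZMod 2 := fun k => if s k = s 0 then 0 else 1 with hσ
  have hrec : ∀ k : ℕ, s (k + 1) = xor (s k) (!(G.sign (C.edge (k : Fin N)))) := by
    intro k
    have h1 : ((k + 1 : ℕ) : Fin N) = (k : Fin N) + 1 := by ext; simp [Fin.val_add, Fin.val_natCast, Nat.add_mod]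
    have h2 := hc (k : Fin N)
    unfold Circuit.ConsistentAt at h2
    rw [xor_halves' G d compat] at h2
    simp only [hs, h1]
    revert h2
    cases s k <;> cases G.sign (C.edge (k : Fin N)) <;>
      cases hx : d (C.edge ((k : Fin N) + 1)) (C.half ((k : Fin N) + 1)) <;> simp [hx]
  have hσrec : ∀ k, σ (k + 1) = σ k + δ k := by
    intro k
    simp only [hσ, hδ, hrec k]
    cases hg : G.sign (C.edge (k : Fin N)) <;> cases hk : s k <;> cases h0 : s 0 <;>
      simp [hg, hk, h0] <;> decide
  have hσsum : ∀ k, σ k = ∑ i ∈ Finset.range k, δ i := by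
    intro k; induction k with
    | zero => simp [hσ]
    | succ k ih => rw [Finset.sum_range_succ, ← ih, hσrec]
  have hsN : s N = s 0 := by
    have h0 : ((N : ℕ) : Fin N) = (0 : Fin N) := Fin.natCast_self N
    simp only [hs, h0]
    norm_num
  have hσN : σ N = 0 := by simp [hσ, hsN]
  have hsum0 : ∑ i ∈ Finset.range N, δ i = 0 := by rw [← hσsum, hσN]
  have hcard : (Finset.univ.filter (fun i => G.sign (C.edge i) = false)).card
      = ∑ i ∈ Finset.range N, (if G.sign (C.edge (i : Fin N)) = false then 1 else 0) := by
    rw [Finset.card_filter]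
    rw [← Fin.sum_univ_eq_sum_range (fun i => if G.sign (C.edge (i : Fin N)) = false then 1 else 0) N]
    apply Finset.sum_congr rfl
    intro i _
    rw [Fin.cast_val_eq_self]
  have hz : ((Finset.univ.filter (fun i => G.sign (C.edge i) = false)).card : ZMod 2) = 0 := by
    rw [hcard, Nat.cast_sum, ← hsum0]
    apply Finset.sum_congr rfl
    intro i _
    by_cases h : G.sign (C.edge (i : Fin N)) = false <;> simp [hδ, h]
  rw [ZMod.natCast_eq_zero_iff] at hz
  exact even_iff_two_dvd.mpr hz

/-- Reversal of a circuit. -/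
@[reducible] def Circuit.myReverse {G : SignedGraph V E} (C : Circuit G) : Circuit G where
  n := C.n
  vtx := fun i => C.vtx (-i)
  edge := fun i => C.edge (-i - 1)
  half := fun i => !(C.half (-i - 1))
  vtx_inj := fun a b h => neg_injective (C.vtx_inj h)
  edge_inj := fun a b h => by
    have h2 := C.edge_inj h
    have : -a = -b := by
      have := congrArg (· + 1) h2
      simpa using this
    exact neg_injective this
  ends_src := fun i => by
    have h := C.ends_tgt (-i - 1)
    simpa [sub_add_cancel] using h
  ends_tgt := fun i => by
    show G.ends (C.edge (-i - 1)) (!(!(C.half (-i - 1)))) = C.vtx (-(i + 1))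
    rw [Bool.not_not, C.ends_src (-i - 1)]
    congr 1
    ring

lemma Circuit.myReverse_consistentAt {G : SignedGraph V E} (C : Circuit G)
    (d : E → Bool → Bool) (i : Fin (C.n + 1)) :
    C.myReverse.ConsistentAt d i ↔ C.ConsistentAt d (-i - 2) := by
  unfold Circuit.ConsistentAt Circuit.myReverse
  simp only [Bool.not_not]
  have e1 : -(i + 1) - 1 = -i - 2 := by ring
  have e2 : (-i - 2) + 1 = -i - 1 := by ring
  rw [e1, e2]
  exact ne_comm

/-- Vertices of the mixed circuit: the trail followed by a segment of `D`. -/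
def mixVtx {G : SignedGraph V E} (T : Trail G) (D : Circuit G) (p : Fin (D.n + 1)) (ℓ : ℕ) :
    Fin (T.m + ℓ + 1) → V := fun i =>
  if h : (i : ℕ) < T.m then T.vtx ⟨(i : ℕ), by omega⟩
  else D.vtx (p + (((i : ℕ) - T.m : ℕ) : Fin (D.n + 1)))

def mixEdge {G : SignedGraph V E} (T : Trail G) (D : Circuit G) (p : Fin (D.n + 1)) (ℓ : ℕ) :
    Fin (T.m + ℓ + 1) → E := fun i =>
  if h : (i : ℕ) < T.m then T.edge ⟨(i : ℕ), h⟩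
  else D.edge (p + (((i : ℕ) - T.m : ℕ) : Fin (D.n + 1)))

def mixHalf {G : SignedGraph V E} (T : Trail G) (D : Circuit G) (p : Fin (D.n + 1)) (ℓ : ℕ) :
    Fin (T.m + ℓ + 1) → Bool := fun i =>
  if h : (i : ℕ) < T.m then T.half ⟨(i : ℕ), h⟩
  else D.half (p + (((i : ℕ) - T.m : ℕ) : Fin (D.n + 1)))

lemma build_balanced (G : SignedGraph V E) (d : E → Bool → Bool)
    (compat : ∀ e, G.sign e = xor (d e false) (d e true)) (φ : E → ℤ)
    (D : Circuit G) (hDsupp : ∀ i, φ (D.edge i) ≠ 0)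
    (j : Fin (D.n + 1))
    (hjcons : ∀ i, i ≠ j → D.ConsistentAt d i)
    (T : Trail G) (hTm : 0 < T.m)
    (hTsupp : ∀ i, φ (T.edge i) ≠ 0)
    (hTpath : Function.Injective T.vtx)
    (hTstart : T.vtx 0 = D.vtx (j + 1))
    (hTfirst : ∀ k : Fin T.m, (k : ℕ) = 0 →
        d (T.edge k) (T.half k) ≠ d (D.edge j) (!(D.half j)))
    (hTcons : ∀ a b : Fin T.m, (a : ℕ) + 1 = (b : ℕ) →
        d (T.edge a) (!(T.half a)) ≠ d (T.edge b) (T.half b))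
    (hTint : ∀ k : Fin (T.m + 1), k ≠ 0 → k ≠ Fin.last T.m → T.vtx k ∉ Set.range D.vtx)
    (hTeD : ∀ a i, T.edge a ≠ D.edge i)
    (p : Fin (D.n + 1)) (hp : T.vtx (Fin.last T.m) = D.vtx p) (hpj : p ≠ j + 1)
    (hgood : ∀ a : Fin T.m, (a : ℕ) + 1 = T.m →
        d (T.edge a) (!(T.half a)) ≠ d (D.edge p) (D.half p)) :
    ∃ C : Circuit G, C.Balanced ∧ (∀ i, C.ConsistentAt d i) ∧ ∀ i, φ (C.edge i) ≠ 0 := by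
  classical
  set m := T.m with hm
  set ℓ : ℕ := ((j - p : Fin (D.n + 1)) : ℕ) with hℓdef
  have hℓN : ℓ < D.n + 1 := (j - p).isLt
  have castInj : ∀ k1 k2 : ℕ, k1 < D.n + 1 → k2 < D.n + 1 →
      ((k1 : Fin (D.n + 1)) = (k2 : Fin (D.n + 1))) → k1 = k2 := by
    intro k1 k2 h1 h2 h
    have hv := congrArg Fin.val h
    rwa [Fin.val_cast_of_lt h1, Fin.val_cast_of_lt h2] at hv
  have hpkey : p + (ℓ : Fin (D.n + 1)) = j := by
    have h : ((ℓ : ℕ) : Fin (D.n + 1)) = j - p := Fin.cast_val_eq_self _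
    rw [h]; ring
  have hℓn : ℓ < D.n := by
    rcases Nat.lt_or_ge ℓ D.n with h | h
    · exact h
    have hℓ : ℓ = D.n := by omega
    exfalso; apply hpj
    have h2 : (((D.n + 1 : ℕ)) : Fin (D.n + 1)) = 0 := Fin.natCast_self _
    have h1 : ((D.n : ℕ) : Fin (D.n + 1)) + 1 = 0 := by
      rw [Nat.cast_add, Nat.cast_one] at h2; exact h2
    rw [← hpkey, hℓ, add_assoc, h1, add_zero]
  have claimA : ∀ k : ℕ, k ≤ ℓ → p + (k : Fin (D.n + 1)) ≠ j + 1 := by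
    intro k hk heq
    have h1 : j + 1 = p + ((ℓ + 1 : ℕ) : Fin (D.n + 1)) := by
      rw [Nat.cast_add, Nat.cast_one, ← add_assoc, hpkey]
    rw [h1] at heq
    have h2 := add_left_cancel heq
    have h3 := castInj k (ℓ + 1) (by omega) (by omega) h2
    omega
  have claimB : ∀ k : ℕ, k < ℓ → p + (k : Fin (D.n + 1)) ≠ j := by
    intro k hk heq
    rw [← hpkey] at heq
    have h2 := add_left_cancel heq
    have h3 := castInj k ℓ (by omega) (by omega) h2
    omega
  have hval1 : ∀ i : Fin (m + ℓ + 1), (i : ℕ) < m + ℓ →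
      ((i + 1 : Fin (m + ℓ + 1)) : ℕ) = (i : ℕ) + 1 := by
    intro i h
    rw [Fin.val_add_one, if_neg]
    intro hh; rw [hh] at h; simp at h
  -- injectivity of vertices
  have hvinj : Function.Injective (mixVtx T D p ℓ) := by
    have mixed : ∀ a b : Fin (m + ℓ + 1), (a : ℕ) < m → ¬ ((b : ℕ) < m) →
        mixVtx T D p ℓ a = mixVtx T D p ℓ b → False := by
      intro a b ha hb hab
      simp only [mixVtx] at hab
      rw [dif_pos ha, dif_neg hb] at hab
      by_cases ha0 : (a : ℕ) = 0
      · have h0 : T.vtx ⟨(a : ℕ), by omega⟩ = T.vtx 0 := by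
          congr 1
          exact Fin.ext ha0
        rw [h0, hTstart] at hab
        have h1 := D.vtx_inj hab
        exact claimA ((b : ℕ) - m) (by omega) h1.symm
      · refine (hTint ⟨(a : ℕ), by omega⟩ ?_ ?_) ⟨_, hab.symm⟩
        · exact Fin.ne_of_val_ne (by simpa using ha0)
        · exact Fin.ne_of_val_ne (by simp [Fin.last]; omega)
    intro a b hab
    by_cases ha : (a : ℕ) < m <;> by_cases hb : (b : ℕ) < m
    · simp only [mixVtx] at hab
      rw [dif_pos ha, dif_pos hb] at hab
      have h1 := hTpath hab
      simp only [Fin.mk.injEq] at h1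
      exact Fin.ext h1
    · exact absurd (mixed a b ha hb hab) (by simp)
    · exact absurd (mixed b a hb ha hab.symm) (by simp)
    · simp only [mixVtx] at hab
      rw [dif_neg ha, dif_neg hb] at hab
      have h1 := add_left_cancel (D.vtx_inj hab)
      have h2 := castInj _ _ (by omega) (by omega) h1
      have ha' := a.isLt; have hb' := b.isLt
      exact Fin.ext (by omega)
  have heinj : Function.Injective (mixEdge T D p ℓ) := by
    intro a b hab
    by_cases ha : (a : ℕ) < m <;> by_cases hb : (b : ℕ) < m <;>
      simp only [mixEdge] at hab
    · rw [dif_pos ha, dif_pos hb] at hab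
      have h1 := T.edge_inj hab
      simp only [Fin.mk.injEq] at h1
      exact Fin.ext h1
    · rw [dif_pos ha, dif_neg hb] at hab
      exact absurd hab (hTeD _ _)
    · rw [dif_neg ha, dif_pos hb] at hab
      exact absurd hab.symm (hTeD _ _)
    · rw [dif_neg ha, dif_neg hb] at hab
      have h1 := add_left_cancel (D.edge_inj hab)
      have h2 := castInj _ _ (by omega) (by omega) h1
      have ha' := a.isLt; have hb' := b.isLt
      exact Fin.ext (by omega)
  have hsrc : ∀ i, G.ends (mixEdge T D p ℓ i) (mixHalf T D p ℓ i) = mixVtx T D p ℓ i := by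
    intro i
    by_cases h : (i : ℕ) < m <;> simp only [mixEdge, mixHalf, mixVtx]
    · rw [dif_pos h, dif_pos h, dif_pos h]
      exact T.ends_src ⟨(i : ℕ), h⟩
    · rw [dif_neg h, dif_neg h, dif_neg h]
      exact D.ends_src _
  have htgt : ∀ i, G.ends (mixEdge T D p ℓ i) (!(mixHalf T D p ℓ i))
      = mixVtx T D p ℓ (i + 1) := by
    intro i
    by_cases h1 : (i : ℕ) < m
    · have hv := hval1 i (by omega)
      by_cases h2 : (i : ℕ) + 1 < m
      · simp only [mixEdge, mixHalf, mixVtx, hv]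
        rw [dif_pos h1, dif_pos h1, dif_pos h2]
        exact T.ends_tgt ⟨(i : ℕ), h1⟩
      · have h2' : (i : ℕ) + 1 = m := by omega
        simp only [mixEdge, mixHalf, mixVtx, hv]
        rw [dif_pos h1, dif_pos h1, dif_neg (by omega)]
        have ht := T.ends_tgt ⟨(i : ℕ), h1⟩
        have hsucc : (Fin.succ ⟨(i : ℕ), h1⟩ : Fin (m + 1)) = Fin.last m := by
          apply Fin.ext; simp [Fin.last, h2']
        rw [hsucc, hp] at ht
        rw [ht]
        congr 1
        have h3 : (i : ℕ) + 1 - m = 0 := by omega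
        rw [h3]
        simp
    · by_cases h3 : (i : ℕ) = m + ℓ
      · have hlast : i = Fin.last (m + ℓ) := Fin.ext (by simpa [Fin.last] using h3)
        have hv : ((i + 1 : Fin (m + ℓ + 1)) : ℕ) = 0 := by
          rw [hlast, Fin.last_add_one]; rfl
        simp only [mixEdge, mixHalf, mixVtx, hv]
        rw [dif_neg h1, dif_neg h1, dif_pos hTm]
        have hkey : ((((i : ℕ) - m : ℕ)) : Fin (D.n + 1)) = ((ℓ : ℕ) : Fin (D.n + 1)) := by
          rw [h3]; congr 1; omega
        rw [hkey, hpkey, D.ends_tgt j, ← hTstart]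
        rfl
      · have hv := hval1 i (by omega)
        simp only [mixEdge, mixHalf, mixVtx, hv]
        rw [dif_neg h1, dif_neg h1, dif_neg (by omega)]
        have hc : ((i : ℕ) + 1 - m : ℕ) = ((i : ℕ) - m) + 1 := by omega
        rw [hc, Nat.cast_add, Nat.cast_one, ← add_assoc]
        exact D.ends_tgt _
  set C : Circuit G := ⟨m + ℓ, mixVtx T D p ℓ, mixEdge T D p ℓ, mixHalf T D p ℓ,
    hvinj, heinj, hsrc, htgt⟩ with hC
  have hcons : ∀ i : Fin (m + ℓ + 1), C.ConsistentAt d i := by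
    intro i
    show d (mixEdge T D p ℓ i) (!(mixHalf T D p ℓ i))
        ≠ d (mixEdge T D p ℓ (i + 1)) (mixHalf T D p ℓ (i + 1))
    by_cases h1 : (i : ℕ) < m
    · have hv := hval1 i (by omega)
      by_cases h2 : (i : ℕ) + 1 < m
      · simp only [mixEdge, mixHalf, hv]
        rw [dif_pos h1, dif_pos h1, dif_pos h2, dif_pos h2]
        exact hTcons ⟨(i : ℕ), h1⟩ ⟨(i : ℕ) + 1, h2⟩ rfl
      · have h2' : (i : ℕ) + 1 = m := by omega
        simp only [mixEdge, mixHalf, hv]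
        rw [dif_pos h1, dif_pos h1, dif_neg (by omega), dif_neg (by omega)]
        have h3 : ((i : ℕ) + 1 - m : ℕ) = 0 := by omega
        rw [h3]
        simp only [Nat.cast_zero, add_zero]
        exact hgood ⟨(i : ℕ), h1⟩ h2'
    · by_cases h3 : (i : ℕ) = m + ℓ
      · have hlast : i = Fin.last (m + ℓ) := Fin.ext (by simpa [Fin.last] using h3)
        have hv : ((i + 1 : Fin (m + ℓ + 1)) : ℕ) = 0 := by
          rw [hlast, Fin.last_add_one]; rfl
        simp only [mixEdge, mixHalf, hv]
        rw [dif_neg h1, dif_neg h1, dif_pos hTm, dif_pos hTm]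
        have hkey : ((((i : ℕ) - m : ℕ)) : Fin (D.n + 1)) = ((ℓ : ℕ) : Fin (D.n + 1)) := by
          rw [h3]; congr 1; omega
        rw [hkey, hpkey]
        exact (hTfirst ⟨0, hTm⟩ rfl).symm
      · have hv := hval1 i (by omega)
        simp only [mixEdge, mixHalf, hv]
        rw [dif_neg h1, dif_neg h1, dif_neg (by omega), dif_neg (by omega)]
        have hc : ((i : ℕ) + 1 - m : ℕ) = ((i : ℕ) - m) + 1 := by omega
        rw [hc, Nat.cast_add, Nat.cast_one, ← add_assoc]
        exact hjcons _ (claimB ((i : ℕ) - m) (by omega))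
  refine ⟨C, consistent_circuit_balanced d compat C hcons, hcons, ?_⟩
  intro i
  show φ (mixEdge T D p ℓ i) ≠ 0
  by_cases h : (i : ℕ) < m <;> simp only [mixEdge]
  · rw [dif_pos h]; exact hTsupp _
  · rw [dif_neg h]; exact hDsupp _
end BalancedAux
/-- Case analysis lemma: with a positive orientation of a flow, two
edge-disjoint consistently directed unbalanced circuits `D`, `D'` in the
support with faulty vertices `d = D.vtx (j+1)`, `d' = D'.vtx (j'+1)`, and a
consistently directed trail `T` (with no repeated vertices, internally
avoiding `D ∪ D'`, edge-disjoint from them, inside the support) starting at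
`d` with its first edge consistent at `d` with the edges of `D`: if the
terminal vertex of `T` lies on `D - d`, then the support contains a
consistently directed balanced circuit. -/
theorem trail_hits_D_gives_balanced {V E : Type} [Fintype E] [DecidableEq V]
    (G : SignedGraph V E) (O : SOrientation G) (φ : E → ℤ)
    (hφ : IsFlow O φ) (hnn : ∀ e, 0 ≤ φ e)
    (D D' : Circuit G) (hD : ¬ D.Balanced) (hD' : ¬ D'.Balanced)
    (hDsupp : ∀ i, φ (D.edge i) ≠ 0) (hD'supp : ∀ i, φ (D'.edge i) ≠ 0)
    (hdisj : ∀ i j, D.edge i ≠ D'.edge j)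
    (j : Fin (D.n + 1)) (hjf : ¬ D.ConsistentAt O.dir j)
    (hjcons : ∀ i, i ≠ j → D.ConsistentAt O.dir i)
    (j' : Fin (D'.n + 1)) (hjf' : ¬ D'.ConsistentAt O.dir j')
    (hjcons' : ∀ i, i ≠ j' → D'.ConsistentAt O.dir i)
    (T : Trail G) (hTm : 0 < T.m)
    (hTsupp : ∀ i, φ (T.edge i) ≠ 0)
    (hTpath : Function.Injective T.vtx)
    (hTstart : T.vtx 0 = D.vtx (j + 1))
    (hTfirst : ∀ k : Fin T.m, (k : ℕ) = 0 →
        O.dir (T.edge k) (T.half k) ≠ O.dir (D.edge j) (!(D.half j)))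
    (hTcons : ∀ a b : Fin T.m, (a : ℕ) + 1 = (b : ℕ) →
        O.dir (T.edge a) (!(T.half a)) ≠ O.dir (T.edge b) (T.half b))
    (hTint : ∀ k : Fin (T.m + 1), k ≠ 0 → k ≠ Fin.last T.m →
        T.vtx k ∉ Set.range D.vtx ∧ T.vtx k ∉ Set.range D'.vtx)
    (hTeD : ∀ a i, T.edge a ≠ D.edge i) (hTeD' : ∀ a i, T.edge a ≠ D'.edge i)
    (hterm : T.vtx (Fin.last T.m) ∈ Set.range D.vtx)
    (htermne : T.vtx (Fin.last T.m) ≠ D.vtx (j + 1)) :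
    ∃ C : Circuit G, C.Balanced ∧ (∀ i, C.ConsistentAt O.dir i) ∧
      ∀ i, φ (C.edge i) ≠ 0 := by

  classical
  obtain ⟨p, hpD⟩ := hterm
  have hp : T.vtx (Fin.last T.m) = D.vtx p := hpD.symm
  have hpj : p ≠ j + 1 := by
    intro h; apply htermne; rw [hp, h]
  by_cases hcase : ∀ a : Fin T.m, (a : ℕ) + 1 = T.m →
      O.dir (T.edge a) (!(T.half a)) ≠ O.dir (D.edge p) (D.half p)
  · exact build_balanced G O.dir O.compat φ D hDsupp j hjcons T hTm hTsupp hTpath hTstart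
      hTfirst hTcons (fun k h1 h2 => (hTint k h1 h2).1) hTeD p hp hpj hcase
  · push_neg at hcase
    obtain ⟨a0, ha0, heq⟩ := hcase
    -- work with the reversed circuit
    set jr : Fin (D.n + 1) := -j - 2 with hjr
    set pr : Fin (D.n + 1) := -p with hpr
    have heqf : O.dir (D.edge j) (!(D.half j)) = O.dir (D.edge (j + 1)) (D.half (j + 1)) := by
      have := hjf
      unfold Circuit.ConsistentAt at this
      exact not_ne_iff.mp this
    have hjconsR : ∀ i : Fin (D.n + 1), i ≠ jr → D.myReverse.ConsistentAt O.dir i := by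
      intro i hi
      rw [Circuit.myReverse_consistentAt]
      apply hjcons
      intro hh
      apply hi
      have : i = -(-i - 2) - 2 := by open Fin.CommRing in ring
      rw [this, hh, hjr]
    have hTstartR : T.vtx 0 = D.myReverse.vtx (jr + 1) := by
      show T.vtx 0 = D.vtx (-(jr + 1))
      have h1 : -(jr + 1) = j + 1 := by rw [hjr]; open Fin.CommRing in ring
      rw [h1]; exact hTstart
    have hTfirstR : ∀ k : Fin T.m, (k : ℕ) = 0 →
        O.dir (T.edge k) (T.half k) ≠ O.dir (D.myReverse.edge jr) (!(D.myReverse.half jr)) := by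
      intro k hk
      show O.dir (T.edge k) (T.half k) ≠ O.dir (D.edge (-jr - 1)) (!(!(D.half (-jr - 1))))
      have h1 : -jr - 1 = j + 1 := by rw [hjr]; open Fin.CommRing in ring
      rw [h1, Bool.not_not, ← heqf]
      exact hTfirst k hk
    have hTintR : ∀ k : Fin (T.m + 1), k ≠ 0 → k ≠ Fin.last T.m →
        T.vtx k ∉ Set.range D.myReverse.vtx := by
      intro k h1 h2 hmem
      apply (hTint k h1 h2).1
      obtain ⟨i, hi⟩ := hmem
      exact ⟨-i, hi⟩
    have hTeDR : ∀ a i, T.edge a ≠ D.myReverse.edge i := fun a i => hTeD a _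
    have hDsuppR : ∀ i, φ (D.myReverse.edge i) ≠ 0 := fun i => hDsupp _
    have hpR : T.vtx (Fin.last T.m) = D.myReverse.vtx pr := by
      show T.vtx (Fin.last T.m) = D.vtx (-pr)
      rw [hpr, neg_neg]; exact hp
    have hpjR : pr ≠ jr + 1 := by
      intro h
      apply hpj
      have h2 : p = -(jr + 1) := by rw [← h, hpr, neg_neg]
      rw [h2, hjr]; open Fin.CommRing in ring
    have hgoodR : ∀ a : Fin T.m, (a : ℕ) + 1 = T.m →
        O.dir (T.edge a) (!(T.half a)) ≠ O.dir (D.myReverse.edge pr) (D.myReverse.half pr) := by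
      intro a ha
      have haa : a = a0 := Fin.ext (by omega)
      subst haa
      show O.dir (T.edge a) (!(T.half a)) ≠ O.dir (D.edge (-pr - 1)) (!(D.half (-pr - 1)))
      have h1 : -pr - 1 = p - 1 := by rw [hpr]; open Fin.CommRing in ring
      rw [h1, heq]
      have hne : p - 1 ≠ j := by
        intro h
        apply hpj
        have : p = (p - 1) + 1 := by open Fin.CommRing in ring
        rw [this, h]
      have hcons := hjcons (p - 1) hne
      unfold Circuit.ConsistentAt at hcons
      have h2 : (p - 1) + 1 = p := by open Fin.CommRing in ring
      rw [h2] at hcons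
      exact hcons.symm
    exact build_balanced G O.dir O.compat φ D.myReverse hDsuppR jr hjconsR T hTm hTsupp hTpath
      hTstartR hTfirstR hTcons hTintR hTeDR pr hpR hpjR hgoodR
end
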